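/- arXiv:1503.08266 — 9 statements merged into one kernel-verified Lean document; each statement's English description precedes it below -/
import Mathlib

section
/- Let R be a commutative unital ring, let r, s, n be natural numbers, and let a_1, ..., a_s ∈ R. If M is an R-module with M ≅ R^r ⊕ ⊕_{i=1}^s R/Ra_i, then the n-th tensor power of M decomposes as T^n M ≅ R^{r^n} ⊕ ⊕_{k=1}^n ⊕_{1 ≤ i_1, ..., i_k ≤ s} ( R/⟨a_{i_1}, ..., a_{i_k}⟩ )^{C(n,k)·r^{n−k}}, where the inner direct sum is over all ordered k-tuples (i_1, ..., i_k) ∈ {1,...,s}^k, ⟨a_{i_1}, ..., a_{i_k}⟩ denotes the ideal generated by a_{i_1}, ..., a_{i_k}, and C(n,k) is the binomial coefficient. -/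
/-!
Write `M ≅ ∏_{x ∈ Fin r ⊕ Fin s} R ⧸ J x` with `J (inl _) = 0` and `J (inr i) = (a i)`.
Since `R ⧸ I ⊗ R ⧸ J ≅ R ⧸ (I + J)` and tensor products commute with finite products,
`T^n M` is the product over all words `g : Fin n → Fin r ⊕ Fin s` of `R ⧸ ∑ⱼ J (g j)`, and
this ideal only depends on the subword `v` of letters from `Fin s`. A subword of length `m`
arises from `C(n, m) · r^(n - m)` words: choose its `m` positions, then fill the others
from `Fin r`.
-/

open TensorProduct PiTensorProduct Finset

variable {R : Type*} [CommRing R]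

theorem Ideal.smul_top_quot_eq_map_sup (I J : Ideal R) :
    I • (⊤ : Submodule R (R ⧸ J)) = Submodule.map J.mkQ (I ⊔ J) := by
  rw [Submodule.map_sup, Submodule.mkQ_map_self, sup_bot_eq, ← Submodule.range_mkQ J,
    LinearMap.range_eq_map, ← Submodule.map_smul'', Ideal.smul_eq_mul, Ideal.mul_top]

noncomputable def Ideal.quotTensorQuotEquivQuotSup (I J : Ideal R) :
    (R ⧸ I) ⊗[R] (R ⧸ J) ≃ₗ[R] R ⧸ (I ⊔ J) :=
  quotTensorEquivQuotSMul (R ⧸ J) I ≪≫ₗ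
    Submodule.quotEquivOfEq _ _ (Ideal.smul_top_quot_eq_map_sup I J) ≪≫ₗ
    Submodule.quotientQuotientEquivQuotient J (I ⊔ J) le_sup_right

theorem Fin.iSup_eq_iSup_castSucc_sup_last {α : Type*} [CompleteLattice α] {n : ℕ}
    (f : Fin (n + 1) → α) : ⨆ j, f j = (⨆ j : Fin n, f j.castSucc) ⊔ f (Fin.last n) :=
  le_antisymm
    (iSup_le <| Fin.lastCases le_sup_right fun j => le_sup_of_le_left (le_iSup_of_le j le_rfl))
    (sup_le (iSup_le fun _ => le_iSup f _) (le_iSup f _))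

noncomputable def TensorPower.piQuotEquiv {ι : Type*} [Fintype ι] [DecidableEq ι]
    (J : ι → Ideal R) :
    (n : ℕ) → ⨂[R]^n (Π i, R ⧸ J i) ≃ₗ[R] Π g : Fin n → ι, R ⧸ ⨆ j, J (g j)
  | 0 => isEmptyEquiv (Fin 0) ≪≫ₗ (LinearEquiv.funUnique (Fin 0 → ι) R R).symm ≪≫ₗ
      LinearEquiv.piCongrRight fun _ => (Submodule.quotEquivOfEqBot _ (by simp)).symm
  -- the new factor goes last (`Fin.snoc`), so that `mulEquiv` lands in `⨂[R]^(n + 1)` on the nose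
  | n + 1 => TensorPower.mulEquiv.symm ≪≫ₗ
      TensorProduct.congr (TensorPower.piQuotEquiv J n) (subsingletonEquiv 0) ≪≫ₗ
      piLeft .. ≪≫ₗ
      LinearEquiv.piCongrRight (fun g => piRight R R _ _ ≪≫ₗ
        LinearEquiv.piCongrRight fun i => Ideal.quotTensorQuotEquivQuotSup _ _ ≪≫ₗ
          Submodule.quotEquivOfEq _ _ (by simp [Fin.iSup_eq_iSup_castSucc_sup_last])) ≪≫ₗ
      (LinearEquiv.piCurry R fun g i =>
        R ⧸ ⨆ j, J (Fin.snoc (α := fun _ => ι) g i j)).symm ≪≫ₗ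
      LinearEquiv.piCongrLeft R (fun g : Fin (n + 1) → ι => R ⧸ ⨆ j, J (g j))
        ((Equiv.sigmaEquivProd _ _).trans ((Equiv.prodComm _ _).trans (Fin.snocEquiv _)))

noncomputable def LinearEquiv.piSigmaEquivPiFin {β : Type*} (F : β → Type*)
    [∀ b, Finite (F b)] (c : β → ℕ) (hc : ∀ b, Nat.card (F b) = c b) (N : β → Type*)
    [∀ b, AddCommGroup (N b)] [∀ b, Module R (N b)] :
    (Π y : Σ b, F b, N y.1) ≃ₗ[R] Π b, Fin (c b) → N b :=
  LinearEquiv.piCurry R (fun b _ => N b) ≪≫ₗ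
    LinearEquiv.piCongrRight fun b =>
      LinearEquiv.funCongrLeft R (N b) (Finite.equivFinOfCardEq (hc b)).symm

noncomputable def LinearEquiv.piEquivPiFinOfCardFiber {α β : Type*} [Finite α] (f : α → β)
    (c : β → ℕ) (hc : ∀ b, Nat.card {x // f x = b} = c b) (N : β → Type*)
    [∀ b, AddCommGroup (N b)] [∀ b, Module R (N b)] :
    (Π x, N (f x)) ≃ₗ[R] Π b, Fin (c b) → N b :=
  LinearEquiv.piCongrLeft R (fun y : Σ b, {x // f x = b} => N y.1)
      (Equiv.sigmaFiberEquiv f).symm ≪≫ₗ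
    LinearEquiv.piSigmaEquivPiFin _ c hc N

def LinearEquiv.curryFinMul (c d : ℕ) (N : Type*) [AddCommGroup N] [Module R N] :
    (Fin (c * d) → N) ≃ₗ[R] Fin c → Fin d → N :=
  LinearEquiv.funCongrLeft R N finProdFinEquiv ≪≫ₗ LinearEquiv.curry R N (Fin c) (Fin d)

theorem Sum.card_getRight?_fiber {α β : Type*} (o : Option β) :
    Nat.card {x : α ⊕ β // x.getRight? = o} = if o = none then Nat.card α else 1 := by
  cases o with
  | none =>
    simp only [Sum.getRight?_eq_none_iff, if_true]
    exact Nat.card_congr Equiv.sumIsLeft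
  | some b => simp

theorem Sum.card_getRight?_comp_fiber {ι α β : Type*} [Fintype ι] (h : ι → Option β) :
    Nat.card {g : ι → α ⊕ β // (fun j => (g j).getRight?) = h} =
      Nat.card α ^ #{j | h j = none} := by
  classical
  rw [Nat.card_congr ((Equiv.subtypeEquivRight fun g => funext_iff).trans
    (Equiv.subtypePiEquivPi (p := fun j (x : α ⊕ β) => x.getRight? = h j)))]
  simp [Nat.card_pi, Sum.card_getRight?_fiber, Finset.prod_ite]

namespace Finset

variable {n m : ℕ} {β : Type*}

noncomputable def embedTuple (T : Finset (Fin n)) (hT : #T = m) (v : Fin m → β) :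
    Fin n → Option β :=
  Function.extend (T.orderEmbOfFin hT) (some ∘ v) fun _ => none

theorem embedTuple_orderEmbOfFin (T : Finset (Fin n)) (hT : #T = m) (v : Fin m → β)
    (i : Fin m) : embedTuple T hT v (T.orderEmbOfFin hT i) = some (v i) :=
  (T.orderEmbOfFin hT).injective.extend_apply _ _ i

theorem embedTuple_eq_none_iff (T : Finset (Fin n)) (hT : #T = m) (v : Fin m → β)
    (j : Fin n) : embedTuple T hT v j = none ↔ j ∉ T := by
  rw [← mem_coe, ← T.range_orderEmbOfFin hT]
  constructor
  · rintro hj ⟨i, rfl⟩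
    simp [embedTuple_orderEmbOfFin] at hj
  · intro hj
    exact Function.extend_apply' _ _ _ fun ⟨i, hi⟩ => hj ⟨i, hi⟩

theorem card_embedTuple_eq_none (T : Finset (Fin n)) (hT : #T = m) (v : Fin m → β) :
    #{j | embedTuple T hT v j = none} = n - m := by
  simp_rw [embedTuple_eq_none_iff, filter_not, filter_mem_eq_inter, univ_inter,
    card_univ_sdiff, Fintype.card_fin, hT]

theorem iSup_elim_embedTuple {α : Type*} [CompleteLattice α] (J : β → α) (T : Finset (Fin n))
    (hT : #T = m) (v : Fin m → β) :
    ⨆ j, (embedTuple T hT v j).elim ⊥ J = ⨆ i, J (v i) := by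
  apply le_antisymm
  · refine iSup_le fun j => ?_
    by_cases hj : j ∈ T
    · rw [← mem_coe, ← T.range_orderEmbOfFin hT] at hj
      obtain ⟨i, rfl⟩ := hj
      simpa [embedTuple_orderEmbOfFin] using le_iSup (fun i => J (v i)) i
    · simp [(embedTuple_eq_none_iff T hT v j).2 hj]
  · exact iSup_le fun i =>
      le_iSup_of_le (T.orderEmbOfFin hT i) (by simp [embedTuple_orderEmbOfFin])

theorem exists_embedTuple_eq (h : Fin n → Option β) :
    ∃ (T : Finset (Fin n)) (v : Fin #T → β), embedTuple T rfl v = h := by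
  classical
  set T : Finset (Fin n) := {j | (h j).isSome}
  have hT : ∀ i, (h (T.orderEmbOfFin rfl i)).isSome := fun i =>
    (mem_filter.1 (T.orderEmbOfFin_mem rfl i)).2
  refine ⟨T, fun i => (h (T.orderEmbOfFin rfl i)).get (hT i), funext fun j => ?_⟩
  by_cases hj : j ∈ T
  · rw [← mem_coe, ← T.range_orderEmbOfFin rfl] at hj
    obtain ⟨i, rfl⟩ := hj
    simp [embedTuple_orderEmbOfFin]
  · rw [(embedTuple_eq_none_iff T rfl _ j).2 hj]
    exact (Option.not_isSome_iff_eq_none.1 fun hs => hj (by simp [T, hs])).symm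

/-- Injectivity comes for free: by the binomial theorem both sides have `(|β| + 1)^n`
elements. -/
noncomputable def embedTupleEquiv (n : ℕ) (β : Type*) [Fintype β] :
    (Σ p : Σ m : Fin (n + 1), Fin m → β, {T : Finset (Fin n) // #T = p.1}) ≃
      (Fin n → Option β) :=
  Equiv.ofBijective (fun y => embedTuple y.2.1 y.2.2 y.1.2) <| by
    classical
    refine (Fintype.bijective_iff_surjective_and_card _).2 ⟨fun h => ?_, ?_⟩
    · obtain ⟨T, v, hv⟩ := exists_embedTuple_eq h
      have hTn : #T < n + 1 := Nat.lt_succ_of_le (T.card_le_univ.trans_eq (Fintype.card_fin n))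
      exact ⟨⟨⟨⟨#T, hTn⟩, v⟩, ⟨T, rfl⟩⟩, hv⟩
    · simp only [Fintype.card_sigma, Fintype.card_finset_len, Fintype.card_fin,
        Fintype.sum_sigma, sum_const, card_univ, Fintype.card_fun, smul_eq_mul,
        Fintype.card_option]
      simp [add_pow, Fin.sum_univ_eq_sum_range (fun m => Fintype.card β ^ m * n.choose m)]

end Finset

section Decomposition

variable {β : Type*} (J : β → Ideal R)

/-- The free summand `R` is encoded as `R ⧸ ⊥`, so that all summands are cyclic. -/
noncomputable def prodPiQuotEquivPiSumQuot (α : Type*) :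
    ((α → R) × Π i, R ⧸ J i) ≃ₗ[R] Π x : α ⊕ β, R ⧸ x.getRight?.elim ⊥ J :=
  LinearEquiv.prodCongr
    (LinearEquiv.piCongrRight fun _ => (Submodule.quotEquivOfEqBot (⊥ : Ideal R) rfl).symm)
    (LinearEquiv.refl R _) ≪≫ₗ
  (LinearEquiv.sumPiEquivProdPi R α β fun x => R ⧸ x.getRight?.elim ⊥ J).symm

noncomputable def piSumQuotEquivPiOptionQuot {ι : Type*} [Fintype ι] [Finite β] (r : ℕ) :
    (Π g : ι → Fin r ⊕ β, R ⧸ ⨆ j, (g j).getRight?.elim ⊥ J) ≃ₗ[R]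
      Π h : ι → Option β, Fin (r ^ #{j | h j = none}) → R ⧸ ⨆ j, (h j).elim ⊥ J :=
  LinearEquiv.piEquivPiFinOfCardFiber (α := ι → Fin r ⊕ β) (β := ι → Option β)
    (N := fun h => R ⧸ ⨆ j, (h j).elim ⊥ J)
    (fun g j => (g j).getRight?) (fun h => r ^ #{j | h j = none})
    (fun h => by rw [Sum.card_getRight?_comp_fiber, Nat.card_fin])

noncomputable def piOptionQuotEquivPiTupleQuot [Fintype β] (b n : ℕ) :
    (Π h : Fin n → Option β, Fin (b ^ #{j | h j = none}) → R ⧸ ⨆ j, (h j).elim ⊥ J)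
      ≃ₗ[R] Π m : Fin (n + 1), Π v : Fin m → β,
        Fin (n.choose m * b ^ (n - m)) → R ⧸ ⨆ i, J (v i) :=
  (LinearEquiv.piCongrLeft R _ (Finset.embedTupleEquiv n β)).symm ≪≫ₗ
  LinearEquiv.piCongrRight (fun y =>
    LinearEquiv.funCongrLeft R _
      (finCongr (congrArg (b ^ ·)
        (Finset.card_embedTuple_eq_none y.2.1 y.2.2 y.1.2).symm)) ≪≫ₗ
    LinearEquiv.piCongrRight fun _ =>
      Submodule.quotEquivOfEq _ _ (Finset.iSup_elim_embedTuple J _ _ _)) ≪≫ₗ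
  LinearEquiv.piSigmaEquivPiFin
    (fun p : Σ m : Fin (n + 1), Fin m → β => {T : Finset (Fin n) // #T = p.1})
    (fun p => n.choose p.1) (fun p => by simp [Fintype.card_finset_len])
    (fun p : Σ m : Fin (n + 1), Fin m → β =>
      Fin (b ^ (n - p.1)) → R ⧸ ⨆ i, J (p.2 i)) ≪≫ₗ
  LinearEquiv.piCongrRight (fun _ => (LinearEquiv.curryFinMul _ _ _).symm) ≪≫ₗ
  LinearEquiv.piCurry R fun (m : Fin (n + 1)) (v : Fin m → β) =>
    Fin (n.choose m * b ^ (n - m)) → R ⧸ ⨆ i, J (v i)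

noncomputable def piTupleQuotEquivProd (b n : ℕ) :
    (Π m : Fin (n + 1), Π v : Fin m → β,
      Fin (n.choose m * b ^ (n - m)) → R ⧸ ⨆ i, J (v i)) ≃ₗ[R]
      (Fin (b ^ n) → R) ×
        Π (k : Fin n) (v : Fin (k.val + 1) → β),
          Fin (n.choose (k.val + 1) * b ^ (n - (k.val + 1))) → R ⧸ ⨆ i, J (v i) :=
  (Fin.consLinearEquiv R fun m : Fin (n + 1) =>
    Π v : Fin m → β, Fin (n.choose m * b ^ (n - m)) → R ⧸ ⨆ i, J (v i)).symm ≪≫ₗ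
  LinearEquiv.prodCongr
    (LinearEquiv.piCongrRight (fun v : Fin 0 → β => LinearEquiv.piCongrRight fun _ =>
        Submodule.quotEquivOfEqBot (⨆ i, J (v i)) (by simp)) ≪≫ₗ
      LinearEquiv.funUnique (Fin 0 → β) R (Fin (n.choose 0 * b ^ (n - 0)) → R) ≪≫ₗ
      LinearEquiv.funCongrLeft R R (finCongr (by simp)))
    (LinearEquiv.refl R _)

end Decomposition

/-- If `M ≅ R^r ⊕ ⊕_{i=1}^s R/Ra_i` over a commutative unital ring `R`, then
`T^n M ≅ R^{r^n} ⊕ ⊕_{k=1}^n ⊕_{1 ≤ i_1,…,i_k ≤ s} (R/⟨a_{i_1},…,a_{i_k}⟩)^{C(n,k)·r^{n-k}}`,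
the inner sum being over all ordered `k`-tuples.  Here `k : Fin n` encodes the index
`k+1 ∈ {1,…,n}`. -/
theorem tensorPower_decomposition
    (R : Type) [CommRing R] (r s n : ℕ) (a : Fin s → R)
    (M : Type) [AddCommGroup M] [Module R M]
    (hM : Nonempty (M ≃ₗ[R] (Fin r → R) × (Π i : Fin s, R ⧸ Ideal.span {a i}))) :
    Nonempty (TensorPower R n M ≃ₗ[R]
      (Fin (r ^ n) → R) ×
      Π (k : Fin n) (v : Fin (k.val + 1) → Fin s),
        Fin (Nat.choose n (k.val + 1) * r ^ (n - (k.val + 1))) →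
          R ⧸ Ideal.span (Set.range fun j => a (v j))) := by
  obtain ⟨e⟩ := hM
  let J : Fin s → Ideal R := fun i => Ideal.span {a i}
  have hJ : ∀ {m : ℕ} (v : Fin m → Fin s),
      ⨆ i, J (v i) = Ideal.span (Set.range fun j => a (v j)) := fun v =>
    (Submodule.span_range_eq_iSup).symm
  exact ⟨PiTensorProduct.congr (fun _ => e ≪≫ₗ prodPiQuotEquivPiSumQuot J (Fin r)) ≪≫ₗ
    TensorPower.piQuotEquiv _ n ≪≫ₗ
    piSumQuotEquivPiOptionQuot J r ≪≫ₗ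
    piOptionQuotEquivPiTupleQuot J r n ≪≫ₗ
    piTupleQuotEquivProd J r n ≪≫ₗ
    LinearEquiv.prodCongr (LinearEquiv.refl R _)
      (LinearEquiv.piCongrRight fun _ => LinearEquiv.piCongrRight fun v =>
        LinearEquiv.piCongrRight fun _ => Submodule.quotEquivOfEq _ _ (hJ v))⟩
end

section
/- Let R be a commutative unital ring, let r, s, n be natural numbers, and let a_1, ..., a_s ∈ R. If M is an R-module with M ≅ R^r ⊕ ⊕_{i=1}^s R/Ra_i, then the n-th symmetric power of M decomposes as S^n M ≅ R^{C(r+n−1,n)} ⊕ ⊕_{k=1}^n ⊕_{1 ≤ i_1 ≤ ... ≤ i_k ≤ s} ( R/⟨a_{i_1}, ..., a_{i_k}⟩ )^{C(r+n−k−1, n−k)}, where the inner direct sum is over all weakly increasing k-tuples (i_1, ..., i_k) with entries in {1,...,s}, ⟨a_{i_1}, ..., a_{i_k}⟩ denotes the ideal generated by a_{i_1}, ..., a_{i_k}, and C(·,·) denotes binomial coefficients. -/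
open TensorProduct PiTensorProduct

/-- The submodule of permutation relations in the `n`-th tensor power. -/
abbrev SymRel (R : Type*) [CommRing R] (M : Type*) [AddCommGroup M] [Module R M] (n : ℕ) :
    Submodule R (TensorPower R n M) :=
  Submodule.span R {x | ∃ (m : Fin n → M) (π : Equiv.Perm (Fin n)),
    x = tprod R (fun i => m (π i)) - tprod R m}

/-- The `n`-th symmetric power `S^n M = T^n M / ⟨m_{π1}⊗⋯⊗m_{πn} − m_1⊗⋯⊗m_n⟩`. -/
abbrev SymPow (R : Type*) [CommRing R] (M : Type*) [AddCommGroup M] [Module R M] (n : ℕ) :=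
  TensorPower R n M ⧸ SymRel R M n

/-!
Write `M ≅ ⊕_c R ⧸ I c`, with `c` running over `Fin r ⊕ Fin s`, `I c = 0` on the free summands and
`I c = (a i)` on the torsion ones, and let `e c` be the generators. Then `S^n M` is spanned by the
monomials `e_μ = e_{c₁} ⋯ e_{cₙ}`, `μ` a multiset of size `n` on the index set, and `e_μ` is killed
by `I_μ = Σ_{c ∈ μ} I c`. Conversely, expanding a pure tensor `m₁ ⊗ ⋯ ⊗ mₙ` in the generators and
adding up the coefficients of all words with multiset `μ` gives a symmetric multilinear form with
values in `R ⧸ I_μ`; these forms invert `⊕_μ R ⧸ I_μ → S^n M`. Finally, a multiset on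
`Fin r ⊕ Fin s` is either a multiset on `Fin r` (and then `I_μ = 0`), or a weakly increasing tuple
`i₁ ≤ ⋯ ≤ i_{k+1}` in `Fin s` together with a multiset of size `n - k - 1` on `Fin r` (and then
`I_μ = (a i₁, …, a i_{k+1})`); multisets of size `m` on `Fin r` are counted by `C(r + m - 1, m)`.
-/

namespace SymPow

variable {R : Type*} [CommRing R] {M N : Type*} [AddCommGroup M] [Module R M]
  [AddCommGroup N] [Module R N] {n : ℕ}

variable (R) in
noncomputable def mk (m : Fin n → M) : SymPow R M n :=
  Submodule.Quotient.mk (tprod R m)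

theorem mk_comp_perm (m : Fin n → M) (π : Equiv.Perm (Fin n)) :
    mk R (fun i => m (π i)) = mk R m :=
  (Submodule.Quotient.eq _).2 (Submodule.subset_span ⟨m, π, rfl⟩)

theorem smul_mk_eq_zero {m : Fin n → M} {x : R} (j : Fin n) (h : x • m j = 0) :
    x • mk R m = 0 := by
  rw [mk, ← Submodule.Quotient.mk_smul, ← Function.update_eq_self j m,
    ← MultilinearMap.map_update_smul, h, MultilinearMap.map_update_zero,
    Submodule.Quotient.mk_zero]

noncomputable def lift (f : MultilinearMap R (fun _ : Fin n => M) N)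
    (hf : ∀ m (π : Equiv.Perm (Fin n)), f (fun i => m (π i)) = f m) :
    SymPow R M n →ₗ[R] N :=
  (SymRel R M n).liftQ (PiTensorProduct.lift f) <| Submodule.span_le.2 <| by
    rintro _ ⟨m, π, rfl⟩
    simpa [sub_eq_zero] using hf m π

@[simp]
theorem lift_mk (f : MultilinearMap R (fun _ : Fin n => M) N)
    (hf : ∀ m (π : Equiv.Perm (Fin n)), f (fun i => m (π i)) = f m) (m : Fin n → M) :
    lift f hf (mk R m) = f m := by
  simp [lift, mk]

theorem ext_of_span_eq_top {ι : Type*} {g : ι → M} (hg : Submodule.span R (Set.range g) = ⊤)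
    {φ ψ : SymPow R M n →ₗ[R] N} (h : ∀ w : Fin n → ι, φ (mk R (g ∘ w)) = ψ (mk R (g ∘ w))) :
    φ = ψ :=
  Submodule.linearMap_qext _ <| PiTensorProduct.ext_of_span_eq_top (fun _ => hg) h

noncomputable def map (f : M →ₗ[R] N) : SymPow R M n →ₗ[R] SymPow R N n :=
  lift (((SymRel R N n).mkQ.compMultilinearMap (tprod R)).compLinearMap fun _ => f)
    fun m π => mk_comp_perm (f ∘ m) π

@[simp]
theorem map_mk (f : M →ₗ[R] N) (m : Fin n → M) : map f (mk R m) = mk R (f ∘ m) :=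
  lift_mk _ _ m

noncomputable def congr (e : M ≃ₗ[R] N) : SymPow R M n ≃ₗ[R] SymPow R N n :=
  .ofLinearMap (map e) (map e.symm)
    (ext_of_span_eq_top (g := id) (by simp) fun w => by simp [Function.comp_def])
    (ext_of_span_eq_top (g := id) (by simp) fun w => by simp [Function.comp_def])

end SymPow

namespace Sym

variable {α : Type*} {n : ℕ}

def ofFn (w : Fin n → α) : Sym α n := ⟨List.ofFn w, by simp⟩

@[simp]
theorem mem_ofFn {w : Fin n → α} {c : α} : c ∈ ofFn w ↔ ∃ j, w j = c := by
  simp [ofFn, Sym.mem_mk]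

theorem ofFn_comp_perm (w : Fin n → α) (π : Equiv.Perm (Fin n)) : ofFn (w ∘ π) = ofFn w :=
  Subtype.ext <| Multiset.coe_eq_coe.2 (π.ofFn_comp_perm w)

theorem ofFn_surjective : Function.Surjective (ofFn : (Fin n → α) → Sym α n) := by
  rintro ⟨μ, hμ⟩
  induction μ using Quotient.inductionOn with
  | h l =>
    subst hμ
    exact ⟨fun j => l.get j, Subtype.ext <| by simp [ofFn]⟩

theorem count_ofFn [DecidableEq α] (w : Fin n → α) (c : α) :
    (ofFn w : Multiset α).count c = Fintype.card {j // w j = c} := by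
  rw [ofFn, Sym.coe_mk, ← Fin.univ_val_map, Multiset.count_map, Fintype.card_subtype]
  simp [Finset.card, Finset.filter_val, eq_comm]

theorem exists_perm_of_ofFn_eq [DecidableEq α] {w w' : Fin n → α} (h : ofFn w = ofFn w') :
    ∃ π : Equiv.Perm (Fin n), w' ∘ π = w := by
  have hcard (c : α) : Fintype.card {j // w j = c} = Fintype.card {j // w' j = c} := by
    rw [← count_ofFn, ← count_ofFn, h]
  exact ⟨.ofFiberEquiv fun c => Fintype.equivOfCardEq (hcard c),
    funext (Equiv.ofFiberEquiv_map _)⟩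

theorem ofFn_injOn_monotone [LinearOrder α] :
    Set.InjOn (ofFn : (Fin n → α) → Sym α n) {w | Monotone w} := fun _ hw _ hw' h =>
  List.ofFn_injective <| (Multiset.coe_eq_coe.1 (congrArg Subtype.val h)).eq_of_sortedLE
    (List.sortedLE_ofFn_iff.2 hw) (List.sortedLE_ofFn_iff.2 hw')

theorem exists_monotone_ofFn_eq [LinearOrder α] (μ : Sym α n) :
    ∃ w, Monotone w ∧ ofFn w = μ := by
  obtain ⟨w, rfl⟩ := ofFn_surjective μ
  exact ⟨w ∘ Tuple.sort w, Tuple.monotone_sort w, ofFn_comp_perm w _⟩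

end Sym

section CyclicSum

open Finset

variable {R : Type*} [CommRing R] {C : Type*} (I : C → Ideal R) {n : ℕ}

def symIdeal (μ : Sym C n) : Ideal R := ⨆ c ∈ μ, I c

variable {I} in
theorem le_symIdeal {μ : Sym C n} {c : C} (hc : c ∈ μ) : I c ≤ symIdeal I μ :=
  le_iSup₂ (f := fun c (_ : c ∈ μ) => I c) c hc

variable [DecidableEq C]

theorem smul_single_one_quot (c : C) (x : R) :
    x • (Pi.single c 1 : Π c, R ⧸ I c) = Pi.single c (Ideal.Quotient.mk (I c) x) := by
  rw [← Pi.single_smul (f := fun c => R ⧸ I c)]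
  simp [Algebra.smul_def]

-- Junk value `0` unless `I c ≤ J`; it is only evaluated at `c ∈ μ` with `J = symIdeal I μ`.
open Classical in
noncomputable def quotCoord (J : Ideal R) (c : C) : (Π c, R ⧸ I c) →ₗ[R] R ⧸ J :=
  if h : I c ≤ J then Submodule.factor h ∘ₗ LinearMap.proj c else 0

theorem quotCoord_single_one {J : Ideal R} {c : C} (h : I c ≤ J) (c' : C) :
    quotCoord I J c (Pi.single c' 1) = if c' = c then 1 else 0 := by
  rcases eq_or_ne c' c with rfl | hc
  · simp [quotCoord, h]
  · simp [quotCoord, h, hc]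

noncomputable def symPowMonomial (μ : Sym C n) : SymPow R (Π c, R ⧸ I c) n :=
  SymPow.mk R fun j => Pi.single (Function.surjInv Sym.ofFn_surjective μ j) 1

variable {I}

theorem symPowMonomial_ofFn (w : Fin n → C) :
    symPowMonomial I (Sym.ofFn w) = SymPow.mk R fun j => Pi.single (w j) 1 := by
  obtain ⟨π, hπ⟩ :=
    Sym.exists_perm_of_ofFn_eq (Function.surjInv_eq Sym.ofFn_surjective (Sym.ofFn w))
  rw [symPowMonomial, ← hπ]
  exact SymPow.mk_comp_perm (fun j => (Pi.single (w j) 1 : Π c, R ⧸ I c)) π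

theorem symIdeal_le_ker_toSpanSingleton (μ : Sym C n) :
    symIdeal I μ ≤ LinearMap.ker (LinearMap.toSpanSingleton R _ (symPowMonomial I μ)) := by
  refine iSup₂_le fun c hc x hx => ?_
  rw [← Function.surjInv_eq Sym.ofFn_surjective μ, Sym.mem_ofFn] at hc
  obtain ⟨j, rfl⟩ := hc
  refine SymPow.smul_mk_eq_zero j ?_
  simp [smul_single_one_quot, Ideal.Quotient.eq_zero_iff_mem.2 hx]

variable [Fintype C]

variable (I) in
theorem span_range_single_one_quot :
    Submodule.span R (Set.range fun c => (Pi.single c 1 : Π c, R ⧸ I c)) = ⊤ := by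
  refine eq_top_iff.2 fun m _ => ?_
  rw [← Finset.univ_sum_single m]
  refine Submodule.sum_mem _ fun c _ => ?_
  obtain ⟨x, hx⟩ := Ideal.Quotient.mk_surjective (m c)
  rw [← hx, ← smul_single_one_quot]
  exact Submodule.smul_mem _ x (Submodule.subset_span ⟨c, rfl⟩)

noncomputable def coeffMultilinear (μ : Sym C n) :
    MultilinearMap R (fun _ : Fin n => Π c, R ⧸ I c) (R ⧸ symIdeal I μ) :=
  ∑ w ∈ univ.filter (Sym.ofFn · = μ),
    (MultilinearMap.mkPiAlgebra R (Fin n) _).compLinearMap fun j => quotCoord I _ (w j)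

theorem coeffMultilinear_apply (μ : Sym C n) (m : Fin n → Π c, R ⧸ I c) :
    coeffMultilinear μ m =
      ∑ w ∈ univ.filter (Sym.ofFn · = μ), ∏ j, quotCoord I _ (w j) (m j) := by
  simp [coeffMultilinear]

theorem coeffMultilinear_comp_perm (μ : Sym C n) (m : Fin n → Π c, R ⧸ I c)
    (π : Equiv.Perm (Fin n)) : coeffMultilinear μ (fun j => m (π j)) = coeffMultilinear μ m := by
  simp only [coeffMultilinear_apply]
  refine Finset.sum_equiv (π.arrowCongr (Equiv.refl C)) (fun w => ?_) fun w _ => ?_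
  · simp only [mem_filter, mem_univ, true_and]
    exact (Sym.ofFn_comp_perm w π.symm).symm ▸ Iff.rfl
  · conv_rhs => rw [← Equiv.prod_comp π]
    simp

theorem coeffMultilinear_single_one (μ : Sym C n) (w : Fin n → C) :
    coeffMultilinear μ (fun j => (Pi.single (w j) 1 : Π c, R ⧸ I c)) =
      if Sym.ofFn w = μ then 1 else 0 := by
  have hterm : ∀ w' ∈ univ.filter (Sym.ofFn · = μ),
      ∏ j, quotCoord I (symIdeal I μ) (w' j) (Pi.single (w j) 1) = if w = w' then 1 else 0 := by
    intro w' hw'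
    have hle (j : Fin n) : I (w' j) ≤ symIdeal I μ :=
      le_symIdeal (by simp [← (mem_filter.1 hw').2])
    simp [quotCoord_single_one _ (hle _), Finset.prod_boole, funext_iff]
  rw [coeffMultilinear_apply, Finset.sum_congr rfl hterm, Finset.sum_ite_eq]
  simp

noncomputable def symPowToPi :
    SymPow R (Π c, R ⧸ I c) n →ₗ[R] Π μ : Sym C n, R ⧸ symIdeal I μ :=
  LinearMap.pi fun μ => SymPow.lift (coeffMultilinear μ) (coeffMultilinear_comp_perm μ)

theorem symPowToPi_mk_single_one (w : Fin n → C) :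
    symPowToPi (SymPow.mk R fun j => (Pi.single (w j) 1 : Π c, R ⧸ I c)) =
      Pi.single (Sym.ofFn w) 1 := by
  ext μ
  rcases eq_or_ne μ (Sym.ofFn w) with rfl | h
  · simp [symPowToPi, coeffMultilinear_single_one]
  · simp [symPowToPi, coeffMultilinear_single_one, h, Ne.symm h]

theorem symPowToPi_symPowMonomial (μ : Sym C n) :
    symPowToPi (symPowMonomial I μ) = Pi.single μ 1 := by
  rw [symPowMonomial, symPowToPi_mk_single_one, Function.surjInv_eq Sym.ofFn_surjective]

noncomputable def piToSymPow :
    (Π μ : Sym C n, R ⧸ symIdeal I μ) →ₗ[R] SymPow R (Π c, R ⧸ I c) n :=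
  LinearMap.lsum R _ R fun μ =>
    (symIdeal I μ).liftQ (LinearMap.toSpanSingleton R _ (symPowMonomial I μ))
      (symIdeal_le_ker_toSpanSingleton μ)

theorem piToSymPow_single_one (μ : Sym C n) :
    piToSymPow (Pi.single μ 1) = symPowMonomial I μ := by
  rw [piToSymPow, LinearMap.lsum_piSingle, ← map_one (Ideal.Quotient.mk _),
    ← Ideal.Quotient.mk_eq_mk, Submodule.liftQ_apply, LinearMap.toSpanSingleton_apply, one_smul]

variable (I n) in
noncomputable def symPowPiQuotEquiv :
    SymPow R (Π c, R ⧸ I c) n ≃ₗ[R] Π μ : Sym C n, R ⧸ symIdeal I μ :=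
  .ofLinearMap symPowToPi piToSymPow
    (by
      ext μ : 3
      simp only [LinearMap.comp_apply, Submodule.mkQ_apply, Ideal.Quotient.mk_eq_mk, map_one,
        LinearMap.coe_single, piToSymPow_single_one, symPowToPi_symPowMonomial,
        LinearMap.id_apply])
    (SymPow.ext_of_span_eq_top (span_range_single_one_quot I) fun w => by
      simp only [LinearMap.comp_apply, LinearMap.id_apply, Function.comp_def]
      rw [symPowToPi_mk_single_one, piToSymPow_single_one, symPowMonomial_ofFn])

end CyclicSum

namespace Multiset

variable {α β : Type*}

theorem disjSum_inj {s s' : Multiset α} {t t' : Multiset β} :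
    s.disjSum t = s'.disjSum t' ↔ s = s' ∧ t = t' := by
  classical
  refine ⟨fun h => ⟨ext.2 fun a => ?_, ext.2 fun b => ?_⟩, fun h => h.1 ▸ h.2 ▸ rfl⟩
  · simpa [disjSum, count_map_eq_count' _ _ Sum.inl_injective, count_map] using
      congrArg (count (Sum.inl a)) h
  · simpa [disjSum, count_map_eq_count' _ _ Sum.inr_injective, count_map] using
      congrArg (count (Sum.inr b)) h

theorem exists_disjSum_eq (μ : Multiset (α ⊕ β)) :
    ∃ (s : Multiset α) (t : Multiset β), s.disjSum t = μ := by
  induction μ using Multiset.induction_on with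
  | empty => exact ⟨0, 0, rfl⟩
  | cons x μ ih =>
    obtain ⟨s, t, rfl⟩ := ih
    cases x with
    | inl a => exact ⟨a ::ₘ s, t, by simp [disjSum]⟩
    | inr b => exact ⟨s, b ::ₘ t, by simp [disjSum]⟩

end Multiset

namespace Sym

variable {α β : Type*} [LinearOrder β] {n : ℕ}

abbrev SumSplit (α β : Type*) [LinearOrder β] (n : ℕ) :=
  Sym α n ⊕ Σ k : Fin n, Σ _ : {v : Fin (k + 1) → β // Monotone v}, Sym α (n - (k + 1))

def ofSumSplit : SumSplit α β n → Sym (α ⊕ β) n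
  | .inl u => u.map .inl
  | .inr ⟨k, v, u⟩ => ⟨(u : Multiset α).disjSum (ofFn v.1 : Multiset β), by
      simp [Nat.sub_add_cancel k.isLt]⟩

theorem inr_mem_ofSumSplit (k : Fin n) (v : {v : Fin (k + 1) → β // Monotone v})
    (u : Sym α (n - (k + 1))) (j : Fin (k + 1)) : .inr (v.1 j) ∈ ofSumSplit (.inr ⟨k, v, u⟩) := by
  simp [ofSumSplit, Sym.mem_mk]

theorem ofSumSplit_injective : Function.Injective (ofSumSplit : SumSplit α β n → _) := by
  rintro (u | ⟨k, v, u⟩) (u' | ⟨k', v', u'⟩) h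
  · exact congrArg _ (map_injective Sum.inl_injective _ h)
  · have hmem := inr_mem_ofSumSplit k' v' u' 0
    rw [← h] at hmem
    simp [ofSumSplit] at hmem
  · have hmem := inr_mem_ofSumSplit k v u 0
    rw [h] at hmem
    simp [ofSumSplit] at hmem
  · obtain ⟨hu, hv⟩ := Multiset.disjSum_inj.1 (congrArg Subtype.val h)
    obtain rfl : k = k' := Fin.ext (by simpa using congrArg Multiset.card hv)
    obtain rfl : v = v' := Subtype.ext (ofFn_injOn_monotone v.2 v'.2 (Subtype.ext hv))
    obtain rfl : u = u' := Sym.coe_injective hu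
    rfl

theorem ofSumSplit_surjective : Function.Surjective (ofSumSplit : SumSplit α β n → _) := by
  rintro ⟨μ, hμ⟩
  obtain ⟨s, t, rfl⟩ := Multiset.exists_disjSum_eq μ
  rw [Multiset.card_disjSum] at hμ
  cases ht : Multiset.card t with
  | zero =>
    refine ⟨.inl ⟨s, by omega⟩, Subtype.ext ?_⟩
    simp [ofSumSplit, Multiset.card_eq_zero.1 ht]
  | succ k =>
    obtain ⟨v, hv, hvt⟩ := exists_monotone_ofFn_eq (⟨t, ht⟩ : Sym β (k + 1))
    refine ⟨.inr ⟨⟨k, by omega⟩, ⟨v, hv⟩, ⟨s, by simp; omega⟩⟩, Subtype.ext ?_⟩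
    simp [ofSumSplit, hvt]

noncomputable def sumSplitEquiv : SumSplit α β n ≃ Sym (α ⊕ β) n :=
  .ofBijective ofSumSplit ⟨ofSumSplit_injective, ofSumSplit_surjective⟩

end Sym

section FreeTorsion

variable {R : Type*} [CommRing R] {α β : Type*} (a : β → R)

variable (α) in
abbrev freeTorsionIdeals : α ⊕ β → Ideal R := Sum.elim (fun _ => ⊥) fun b => Ideal.span {a b}

noncomputable def prodEquivPiQuot [DecidableEq α] :
    ((α → R) × Π b, R ⧸ Ideal.span {a b}) ≃ₗ[R] Π c, R ⧸ freeTorsionIdeals α a c :=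
  ((LinearEquiv.piCongrRight fun _ => (Submodule.quotEquivOfEqBot ⊥ rfl).symm).prodCongr
    (LinearEquiv.refl R _)).trans
    (LinearEquiv.sumPiEquivProdPi R α β fun c => R ⧸ freeTorsionIdeals α a c).symm

variable [LinearOrder β] {n : ℕ}

theorem symIdeal_ofSumSplit_inl (u : Sym α n) :
    symIdeal (freeTorsionIdeals α a) (Sym.ofSumSplit (.inl u : Sym.SumSplit α β n)) = ⊥ := by
  refine iSup₂_eq_bot.2 fun c hc => ?_
  obtain ⟨x, -, rfl⟩ := Sym.mem_map.1 hc
  rfl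

theorem symIdeal_ofSumSplit_inr (k : Fin n) (v : {v : Fin (k + 1) → β // Monotone v})
    (u : Sym α (n - (k + 1))) :
    symIdeal (freeTorsionIdeals α a) (Sym.ofSumSplit (.inr ⟨k, v, u⟩)) =
      Ideal.span (Set.range fun j => a (v.1 j)) := by
  refine le_antisymm (iSup₂_le fun c hc => ?_) (Ideal.span_le.2 ?_)
  · simp only [Sym.ofSumSplit, Sym.mem_mk, Multiset.mem_disjSum, Sym.mem_coe, Sym.mem_ofFn] at hc
    rcases hc with ⟨x, -, rfl⟩ | ⟨b, ⟨j, rfl⟩, rfl⟩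
    · exact bot_le
    · exact Ideal.span_mono (Set.singleton_subset_iff.2 ⟨j, rfl⟩)
  · rintro _ ⟨j, rfl⟩
    exact le_symIdeal (Sym.inr_mem_ofSumSplit k v u j) (Ideal.mem_span_singleton_self _)

end FreeTorsion

noncomputable def Sym.equivFinChoose (r m : ℕ) : Sym (Fin r) m ≃ Fin ((r + m - 1).choose m) :=
  Fintype.equivFinOfCardEq (by simp [Sym.card_sym_eq_choose])

noncomputable def symPowFreeTorsionEquiv {R : Type*} [CommRing R] {r s : ℕ} (a : Fin s → R)
    (n : ℕ) :
    (Π μ : Sym (Fin r ⊕ Fin s) n, R ⧸ symIdeal (freeTorsionIdeals (Fin r) a) μ) ≃ₗ[R]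
      (Fin ((r + n - 1).choose n) → R) ×
      Π (k : Fin n) (v : {v : Fin (k.val + 1) → Fin s // Monotone v}),
        Fin ((r + (n - (k.val + 1)) - 1).choose (n - (k.val + 1))) →
          R ⧸ Ideal.span (Set.range fun j => a (v.1 j)) :=
  (LinearEquiv.piCongrLeft R _ Sym.sumSplitEquiv).symm ≪≫ₗ
    LinearEquiv.sumPiEquivProdPi R _ _ _ ≪≫ₗ
    LinearEquiv.prodCongr
      ((LinearEquiv.piCongrRight fun u =>
          Submodule.quotEquivOfEqBot _ (symIdeal_ofSumSplit_inl a u)) ≪≫ₗ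
        LinearEquiv.funCongrLeft R R (Sym.equivFinChoose r n).symm)
      (LinearEquiv.piCurry R (fun k p =>
          R ⧸ symIdeal (freeTorsionIdeals (Fin r) a) (Sym.ofSumSplit (.inr ⟨k, p⟩))) ≪≫ₗ
        LinearEquiv.piCongrRight fun k =>
          LinearEquiv.piCurry R (fun v u =>
            R ⧸ symIdeal (freeTorsionIdeals (Fin r) a) (Sym.ofSumSplit (.inr ⟨k, v, u⟩))) ≪≫ₗ
          LinearEquiv.piCongrRight fun v =>
            (LinearEquiv.piCongrRight fun u =>
              Submodule.quotEquivOfEq _ _ (symIdeal_ofSumSplit_inr a k v u)) ≪≫ₗ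
            LinearEquiv.funCongrLeft R _ (Sym.equivFinChoose r _).symm)

/-- If `M ≅ R^r ⊕ ⊕_{i=1}^s R/Ra_i`, then
`S^n M ≅ R^{C(r+n-1,n)} ⊕ ⊕_{k=1}^n ⊕_{1 ≤ i_1 ≤ … ≤ i_k ≤ s}
(R/⟨a_{i_1},…,a_{i_k}⟩)^{C(r+n-k-1,n-k)}`, the inner sum being over weakly increasing
`k`-tuples (encoded as monotone functions `Fin k → Fin s`).  Here `k : Fin n` encodes the
index `k+1 ∈ {1,…,n}`. -/
theorem symPower_decomposition
    (R : Type) [CommRing R] (r s n : ℕ) (a : Fin s → R)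
    (M : Type) [AddCommGroup M] [Module R M]
    (hM : Nonempty (M ≃ₗ[R] (Fin r → R) × (Π i : Fin s, R ⧸ Ideal.span {a i}))) :
    Nonempty (SymPow R M n ≃ₗ[R]
      (Fin ((r + n - 1).choose n) → R) ×
      Π (k : Fin n) (v : {v : Fin (k.val + 1) → Fin s // Monotone v}),
        Fin ((r + (n - (k.val + 1)) - 1).choose (n - (k.val + 1))) →
          R ⧸ Ideal.span (Set.range fun j => a (v.1 j))) := by
  obtain ⟨e⟩ := hM
  exact ⟨SymPow.congr (e ≪≫ₗ prodEquivPiQuot a) ≪≫ₗ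
    symPowPiQuotEquiv (freeTorsionIdeals (Fin r) a) n ≪≫ₗ symPowFreeTorsionEquiv a n⟩
end

section
/- Let R be a commutative unital ring, let r, s, n be natural numbers, and let a_1, ..., a_s ∈ R. If M is an R-module with M ≅ R^r ⊕ ⊕_{i=1}^s R/Ra_i, then the n-th exterior power of M decomposes as Λ^n M ≅ R^{C(r,n)} ⊕ ⊕_{k=1}^n ⊕_{1 ≤ i_1 < ... < i_k ≤ s} ( R/⟨a_{i_1}, ..., a_{i_k}⟩ )^{C(r, n−k)}, where the inner direct sum is over all strictly increasing k-tuples (i_1, ..., i_k) with entries in {1,...,s}, ⟨a_{i_1}, ..., a_{i_k}⟩ denotes the ideal generated by a_{i_1}, ..., a_{i_k}, and C(·,·) denotes binomial coefficients. -/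
/-!
Write `M ≅ Π i, R ⧸ I i` over `ι = Fin r ⊕ Fin s`, with `I = ⊥` on the free part and
`I j = (a j)` on the torsion part, and let `e i` be the generators. For an `n`-subset `S` of `ι`,
the wedge `e_S` of the `e i`, `i ∈ S`, is killed by `J_S = Σ_{i ∈ S} I i`, and these wedges span
`Λ^n M`. Conversely the `n × n` minor on the columns indexed by `S` is a well-defined alternating
form with values in `R ⧸ J_S`, and it sends `e_T` to `δ_{S,T}`. Hence `Λ^n M ≅ Π_S R ⧸ J_S`.
Splitting `S` into its free part and its torsion part, of size `k`, gives the binomial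
multiplicities `C(r, n - k)` and the ideals `(a_{i_1}, …, a_{i_k})`.
-/

open TensorProduct PiTensorProduct

/-- The submodule of alternating relations in the `n`-th tensor power. -/
abbrev ExtRel (R : Type*) [CommRing R] (M : Type*) [AddCommGroup M] [Module R M] (n : ℕ) :
    Submodule R (TensorPower R n M) :=
  Submodule.span R {x | ∃ m : Fin n → M,
    (∃ i j : Fin n, i ≠ j ∧ m i = m j) ∧ x = tprod R m}

/-- The `n`-th exterior power
`Λ^n M = T^n M / ⟨m_1⊗⋯⊗m_n : m_i = m_j for some i ≠ j⟩`. -/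
abbrev ExtPow (R : Type*) [CommRing R] (M : Type*) [AddCommGroup M] [Module R M] (n : ℕ) :=
  TensorPower R n M ⧸ ExtRel R M n

open Set

namespace Set.powersetCard

section Sum

variable {α β : Type*} {n : ℕ}

def cardToRight (S : powersetCard (α ⊕ β) n) : Fin (n + 1) :=
  ⟨S.1.toRight.card, Nat.lt_succ_of_le (Finset.card_toRight_le.trans_eq (card_eq S))⟩

def fiberCardToRightEquiv (k : Fin (n + 1)) :
    {S : powersetCard (α ⊕ β) n // cardToRight S = k} ≃
      (_ : powersetCard β k) × powersetCard α (n - k) where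
  toFun S := ⟨ofCard (s := S.1.1.toRight) (congrArg Fin.val S.2), ofCard (s := S.1.1.toLeft) (by
      have hsum := Finset.card_toLeft_add_card_toRight (u := S.1.1)
      have hS := card_eq S.1
      have hk := congrArg Fin.val S.2
      simp only [cardToRight] at hk
      omega)⟩
  invFun p := ⟨ofCard (s := p.2.1.disjSum p.1.1) (by
      rw [Finset.card_disjSum, card_eq, card_eq]
      omega), Fin.ext (by simp [cardToRight])⟩
  left_inv S := Subtype.ext (Subtype.ext Finset.toLeft_disjSum_toRight)
  right_inv p := Sigma.ext (Subtype.ext Finset.toRight_disjSum)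
    (heq_of_eq (Subtype.ext Finset.toLeft_disjSum))

variable (α β n) in
def sumEquiv :
    powersetCard (α ⊕ β) n ≃ Σ k : Fin (n + 1), (_ : powersetCard β k) × powersetCard α (n - k) :=
  (Equiv.sigmaFiberEquiv cardToRight).symm.trans (Equiv.sigmaCongrRight fiberCardToRightEquiv)

lemma sup_sum_elim_bot {γ : Type*} [SemilatticeSup γ] [OrderBot γ] (f : β → γ)
    (S : powersetCard (α ⊕ β) n) :
    S.1.sup (Sum.elim ⊥ f) = (sumEquiv α β n S).2.1.1.sup f := by
  conv_lhs => rw [← Finset.toLeft_disjSum_toRight (u := S.1)]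
  rw [Finset.sup_disjSum]
  simp only [Sum.elim_inl, Sum.elim_inr, Pi.bot_apply, Finset.sup_bot, bot_sup_eq]
  rfl

end Sum

section StrictMono

variable {β : Type*} [LinearOrder β] {k : ℕ}

def equivStrictMono : powersetCard β k ≃ {v : Fin k → β // StrictMono v} :=
  ofFinEmbEquiv.symm.trans
    { toFun f := ⟨f, f.strictMono⟩
      invFun v := OrderEmbedding.ofStrictMono v.1 v.2
      left_inv _ := rfl
      right_inv _ := rfl }

lemma sup_span_singleton_eq_span_range {R : Type*} [CommRing R] (a : β → R)
    (B : powersetCard β k) :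
    B.1.sup (fun j => Ideal.span {a j}) =
      Ideal.span (range fun l => a ((equivStrictMono B).1 l)) := by
  rw [Finset.sup_eq_iSup, Ideal.span, Submodule.span_range_eq_iSup]
  refine le_antisymm (iSup₂_le fun j hj => ?_) (iSup_le fun l => ?_)
  · obtain ⟨l, rfl⟩ := (mem_range_ofFinEmbEquiv_symm_iff_mem B j).mpr hj
    exact le_iSup (fun l => Ideal.span {a ((equivStrictMono B).1 l)}) l
  · exact le_iSup₂_of_le _ ((mem_range_ofFinEmbEquiv_symm_iff_mem B _).mp ⟨l, rfl⟩) le_rfl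

end StrictMono

end Set.powersetCard

open Set.powersetCard

instance {β : Type*} [Preorder β] : Unique {v : Fin 0 → β // StrictMono v} where
  default := ⟨Fin.elim0, fun i => i.elim0⟩
  uniq _ := Subtype.ext (funext fun i => i.elim0)

section Pi

variable {R : Type*} [CommRing R]

def LinearEquiv.piCongr {κ κ' : Type*} {P : κ → Type*} {Q : κ' → Type*}
    [∀ x, AddCommGroup (P x)] [∀ x, Module R (P x)] [∀ y, AddCommGroup (Q y)]
    [∀ y, Module R (Q y)] (e : κ ≃ κ') (f : ∀ x, P x ≃ₗ[R] Q (e x)) :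
    (Π x, P x) ≃ₗ[R] Π y, Q y :=
  (LinearEquiv.piCongrRight f).trans (LinearEquiv.piCongrLeft R Q e)

variable (R) in
def LinearEquiv.piFinSucc {n : ℕ} (D : Fin (n + 1) → Type*) [∀ k, AddCommGroup (D k)]
    [∀ k, Module R (D k)] : (Π k, D k) ≃ₗ[R] D 0 × Π k : Fin n, D k.succ where
  __ := (Fin.consEquiv D).symm
  map_add' _ _ := rfl
  map_smul' _ _ := rfl

variable {ι : Type*} (I : ι → Ideal R)

lemma smul_single_one_eq_zero_of_mem [DecidableEq ι] {i : ι} {x : R} (hx : x ∈ I i) :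
    x • (Pi.single i 1 : Π i, R ⧸ I i) = 0 := by
  rw [← Pi.single_smul, Algebra.smul_def, mul_one, Ideal.Quotient.algebraMap_eq,
    Ideal.Quotient.eq_zero_iff_mem.mpr hx, Pi.single_zero]

lemma span_range_single_one [Fintype ι] [DecidableEq ι] :
    Submodule.span R (range fun i => (Pi.single i 1 : Π i, R ⧸ I i)) = ⊤ := by
  refine eq_top_iff.mpr fun x _ => ?_
  rw [← Finset.univ_sum_single x]
  refine Submodule.sum_mem _ fun i _ => ?_
  obtain ⟨c, hc⟩ := Ideal.Quotient.mk_surjective (x i)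
  rw [← hc, ← Ideal.Quotient.algebraMap_eq, Algebra.algebraMap_eq_smul_one, Pi.single_smul]
  exact Submodule.smul_mem _ _ (Submodule.subset_span ⟨i, rfl⟩)

end Pi

lemma MultilinearMap.smul_map_eq_zero_of_smul_eq_zero {R ι M N : Type*} [CommRing R]
    [DecidableEq ι] [AddCommGroup M] [Module R M] [AddCommGroup N] [Module R N]
    (f : MultilinearMap R (fun _ : ι => M) N) (m : ι → M) {c : R} {k : ι}
    (hc : c • m k = 0) : c • f m = 0 := by
  have h := f.map_update_smul m k c (m k)
  rwa [Function.update_eq_self, hc, f.map_update_zero, eq_comm] at h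

section ExtPow

variable (R M : Type*) [CommRing R] [AddCommGroup M] [Module R M] (n : ℕ)

def ExtPow.ιMulti : M [⋀^Fin n]→ₗ[R] ExtPow R M n where
  toMultilinearMap := (ExtRel R M n).mkQ.compMultilinearMap (tprod R)
  map_eq_zero_of_eq' m i j hm hij :=
    (Submodule.Quotient.mk_eq_zero _).mpr (Submodule.subset_span ⟨m, ⟨i, j, hij, hm⟩, rfl⟩)

lemma ExtPow.ιMulti_apply (m : Fin n → M) :
    ExtPow.ιMulti R M n m = Submodule.Quotient.mk (tprod R m) := rfl

noncomputable def ExtPow.toExteriorPower : ExtPow R M n →ₗ[R] ⋀[R]^n M :=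
  (ExtRel R M n).liftQ (PiTensorProduct.lift (exteriorPower.ιMulti R n).toMultilinearMap) <| by
    rw [Submodule.span_le]
    rintro _ ⟨m, ⟨i, j, hij, hm⟩, rfl⟩
    simpa using (exteriorPower.ιMulti R n).map_eq_zero_of_eq m hm hij

lemma ExtPow.toExteriorPower_ιMulti (m : Fin n → M) :
    ExtPow.toExteriorPower R M n (ExtPow.ιMulti R M n m) = exteriorPower.ιMulti R n m := by
  simp only [ExtPow.toExteriorPower, ExtPow.ιMulti_apply, Submodule.liftQ_apply, lift.tprod,
    AlternatingMap.coe_multilinearMap]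

noncomputable def ExtPow.equivExteriorPower : ExtPow R M n ≃ₗ[R] ⋀[R]^n M :=
  LinearEquiv.ofLinearMap (ExtPow.toExteriorPower R M n)
    (exteriorPower.alternatingMapLinearEquiv (ExtPow.ιMulti R M n))
    (exteriorPower.linearMap_ext <| AlternatingMap.ext fun m => by
      simp only [LinearMap.compAlternatingMap_apply, LinearMap.comp_apply,
        exteriorPower.alternatingMapLinearEquiv_apply_ιMulti, ExtPow.toExteriorPower_ιMulti,
        LinearMap.id_apply])
    (Submodule.linearMap_qext _ <| PiTensorProduct.ext <| MultilinearMap.ext fun m => by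
      simp only [LinearMap.compMultilinearMap_apply, LinearMap.comp_apply, Submodule.mkQ_apply,
        ← ExtPow.ιMulti_apply, ExtPow.toExteriorPower_ιMulti,
        exteriorPower.alternatingMapLinearEquiv_apply_ιMulti, LinearMap.id_apply])

end ExtPow

namespace exteriorPower

variable {R : Type*} [CommRing R]

noncomputable def congr {M N : Type*} [AddCommGroup M] [Module R M] [AddCommGroup N] [Module R N]
    (n : ℕ) (e : M ≃ₗ[R] N) : ⋀[R]^n M ≃ₗ[R] ⋀[R]^n N :=
  LinearEquiv.ofLinearMap (map n e) (map n e.symm)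
    (by rw [← map_comp, e.comp_symm, map_id])
    (by rw [← map_comp, e.symm_comp, map_id])

section PiQuotient

variable {ι : Type*} [LinearOrder ι] (I : ι → Ideal R) (n : ℕ)

noncomputable def minorCoords (S : powersetCard ι n) :
    (Π i, R ⧸ I i) →ₗ[R] Fin n → R ⧸ S.1.sup I :=
  LinearMap.pi fun l => Submodule.factor (Finset.le_sup
    ((mem_range_ofFinEmbEquiv_symm_iff_mem S _).mp ⟨l, rfl⟩)) ∘ₗ
    LinearMap.proj (ofFinEmbEquiv.symm S l)

lemma minorCoords_single_one (S : powersetCard ι n) (i : ι) (l : Fin n) :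
    minorCoords I n S (Pi.single i 1) l = if ofFinEmbEquiv.symm S l = i then 1 else 0 := by
  by_cases h : ofFinEmbEquiv.symm S l = i
  · subst h
    simp only [minorCoords, LinearMap.pi_apply, LinearMap.comp_apply, LinearMap.proj_apply,
      Pi.single_eq_same, if_true]
    exact Submodule.factor_mk _ 1
  · simp [minorCoords, h]

noncomputable def minor (S : powersetCard ι n) :
    (Π i, R ⧸ I i) [⋀^Fin n]→ₗ[R] (R ⧸ S.1.sup I) where
  toMultilinearMap := (Matrix.detRowAlternating.toMultilinearMap.restrictScalars R).compLinearMap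
    fun _ => minorCoords I n S
  map_eq_zero_of_eq' m i j h hij :=
    Matrix.detRowAlternating.map_eq_zero_of_eq (fun k => minorCoords I n S (m k)) (by simp [h]) hij

lemma minor_apply (S : powersetCard ι n) (m : Fin n → Π i, R ⧸ I i) :
    minor I n S m = (Matrix.of fun k l => minorCoords I n S (m k) l).det := rfl

lemma minor_single_one (S T : powersetCard ι n) :
    minor I n S ((fun i => Pi.single i 1) ∘ ofFinEmbEquiv.symm T) = if S = T then 1 else 0 := by
  rw [minor_apply]
  split_ifs with h
  · subst h
    convert Matrix.det_one (R := R ⧸ S.1.sup I) (n := Fin n)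
    ext k l
    simp [minorCoords_single_one, Matrix.one_apply, (ofFinEmbEquiv.symm S).injective.eq_iff,
      eq_comm]
  · obtain ⟨i, hiT, hiS⟩ := (exists_mem_notMem_iff_ne T S).mp (Ne.symm h)
    obtain ⟨k, rfl⟩ := (mem_range_ofFinEmbEquiv_symm_iff_mem T i).mpr hiT
    refine Matrix.det_eq_zero_of_row_eq_zero k fun l => ?_
    rw [Matrix.of_apply, Function.comp_apply, minorCoords_single_one, if_neg]
    exact fun heq => hiS (heq ▸ (mem_range_ofFinEmbEquiv_symm_iff_mem S _).mp ⟨l, rfl⟩)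

noncomputable def toPiQuotient :
    ⋀[R]^n (Π i, R ⧸ I i) →ₗ[R] Π S : powersetCard ι n, R ⧸ S.1.sup I :=
  LinearMap.pi fun S => alternatingMapLinearEquiv (minor I n S)

lemma toPiQuotient_ιMulti_family (T : powersetCard ι n) :
    toPiQuotient I n (ιMulti_family R n (fun i => Pi.single i 1) T) = Pi.single T 1 := by
  ext S
  simp only [toPiQuotient, ιMulti_family, LinearMap.pi_apply,
    alternatingMapLinearEquiv_apply_ιMulti, minor_single_one]
  rcases eq_or_ne S T with rfl | h
  · rw [if_pos rfl, Pi.single_eq_same]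
  · rw [if_neg h, Pi.single_eq_of_ne h]

lemma sup_le_ker_ιMulti_family (S : powersetCard ι n) :
    S.1.sup I ≤ LinearMap.ker (LinearMap.toSpanSingleton R _
      (ιMulti_family R n (fun i => (Pi.single i 1 : Π i, R ⧸ I i)) S)) := by
  refine Finset.sup_le fun i hi x hx => ?_
  obtain ⟨k, rfl⟩ := (mem_range_ofFinEmbEquiv_symm_iff_mem S i).mpr hi
  exact (ιMulti R n).toMultilinearMap.smul_map_eq_zero_of_smul_eq_zero _
    (smul_single_one_eq_zero_of_mem I hx)

variable [Fintype ι]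

noncomputable def ofPiQuotient :
    (Π S : powersetCard ι n, R ⧸ S.1.sup I) →ₗ[R] ⋀[R]^n (Π i, R ⧸ I i) :=
  LinearMap.lsum R _ R fun S => (S.1.sup I).liftQ _ (sup_le_ker_ιMulti_family I n S)

lemma ofPiQuotient_single_one (S : powersetCard ι n) :
    ofPiQuotient I n (Pi.single S 1) = ιMulti_family R n (fun i => Pi.single i 1) S := by
  rw [ofPiQuotient, LinearMap.lsum_apply, LinearMap.sum_apply, Finset.sum_eq_single S]
  · rw [LinearMap.comp_apply, LinearMap.proj_apply, Pi.single_eq_same]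
    exact one_smul R _
  · intro T _ hT
    simp [Pi.single_eq_of_ne hT]
  · simp

noncomputable def piQuotientEquiv :
    ⋀[R]^n (Π i, R ⧸ I i) ≃ₗ[R] Π S : powersetCard ι n, R ⧸ S.1.sup I :=
  LinearEquiv.ofLinearMap (toPiQuotient I n) (ofPiQuotient I n)
    (LinearMap.pi_ext' fun S => Submodule.linearMap_qext _ <| LinearMap.ext_ring <| by
      have h1 : Submodule.Quotient.mk (p := S.1.sup I) (1 : R) = 1 := rfl
      simp only [LinearMap.comp_apply, Submodule.mkQ_apply, h1, LinearMap.coe_single,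
        ofPiQuotient_single_one, toPiQuotient_ιMulti_family, LinearMap.id_apply])
    (LinearMap.ext_on (ιMulti_family_span_of_span R (n := n) (span_range_single_one I)) <| by
      rintro _ ⟨T, rfl⟩
      simp [toPiQuotient_ιMulti_family, ofPiQuotient_single_one])

end PiQuotient

theorem nonempty_equiv_pi_quotient {ι : Type*} [Finite ι] (I : ι → Ideal R) (n : ℕ) :
    Nonempty (⋀[R]^n (Π i, R ⧸ I i) ≃ₗ[R] Π S : powersetCard ι n, R ⧸ S.1.sup I) := by
  have := Fintype.ofFinite ι
  let : LinearOrder ι := LinearOrder.lift' _ (Fintype.equivFin ι).injective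
  exact ⟨piQuotientEquiv I n⟩

theorem nonempty_equiv_prod_pi_quotient {α β : Type*} [Finite α] [Finite β] (I : β → Ideal R)
    (n : ℕ) :
    Nonempty (⋀[R]^n ((α → R) × Π j, R ⧸ I j) ≃ₗ[R]
      Π (k : Fin (n + 1)) (B : powersetCard β k), powersetCard α (n - k) → R ⧸ B.1.sup I) := by
  obtain ⟨e⟩ := nonempty_equiv_pi_quotient (Sum.elim (⊥ : α → Ideal R) I) n
  let toPi : ((α → R) × Π j, R ⧸ I j) ≃ₗ[R] Π i, R ⧸ Sum.elim (⊥ : α → Ideal R) I i :=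
    ((LinearEquiv.piCongrRight fun _ => (Submodule.quotEquivOfEqBot ⊥ rfl).symm).prodCongr
      (LinearEquiv.refl R _)).trans
    (LinearEquiv.sumPiEquivProdPi R α β fun i => R ⧸ Sum.elim (⊥ : α → Ideal R) I i).symm
  exact ⟨(congr n toPi).trans <| e.trans <|
    (LinearEquiv.piCongr (sumEquiv α β n) fun S =>
      Submodule.quotEquivOfEq _ _ (sup_sum_elim_bot I S)).trans <|
    (LinearEquiv.piCurry R _).trans (LinearEquiv.piCongrRight fun _ => LinearEquiv.piCurry R _)⟩

end exteriorPower

section StrictMono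

variable (R : Type*) [CommRing R] {β : Type*} [LinearOrder β] (a : β → R)

noncomputable def piPowersetCardEquivPiStrictMono (k r m : ℕ) :
    (Π B : powersetCard β k, powersetCard (Fin r) m → R ⧸ B.1.sup fun j => Ideal.span {a j})
      ≃ₗ[R] Π v : {v : Fin k → β // StrictMono v}, Fin (r.choose m) →
        R ⧸ Ideal.span (range fun j => a (v.1 j)) :=
  LinearEquiv.piCongr equivStrictMono fun B =>
    (LinearEquiv.funCongrLeft R _ (Finite.equivFinOfCardEq (by
      rw [powersetCard.card, Nat.card_fin])).symm).trans
    (LinearEquiv.piCongrRight fun _ =>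
      Submodule.quotEquivOfEq _ _ (sup_span_singleton_eq_span_range a B))

noncomputable def piStrictMonoZeroEquiv (X : Type*) :
    (Π v : {v : Fin 0 → β // StrictMono v}, X → R ⧸ Ideal.span (range fun j => a (v.1 j)))
      ≃ₗ[R] (X → R) :=
  (LinearEquiv.piUnique R _).trans (LinearEquiv.piCongrRight fun _ =>
    Submodule.quotEquivOfEqBot _ (by simp))

end StrictMono

/-- If `M ≅ R^r ⊕ ⊕_{i=1}^s R/Ra_i`, then
`Λ^n M ≅ R^{C(r,n)} ⊕ ⊕_{k=1}^n ⊕_{1 ≤ i_1 < … < i_k ≤ s}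
(R/⟨a_{i_1},…,a_{i_k}⟩)^{C(r,n-k)}`, the inner sum being over strictly increasing
`k`-tuples (encoded as strictly monotone functions `Fin k → Fin s`).  Here `k : Fin n`
encodes the index `k+1 ∈ {1,…,n}`. -/
theorem extPower_decomposition
    (R : Type) [CommRing R] (r s n : ℕ) (a : Fin s → R)
    (M : Type) [AddCommGroup M] [Module R M]
    (hM : Nonempty (M ≃ₗ[R] (Fin r → R) × (Π i : Fin s, R ⧸ Ideal.span {a i}))) :
    Nonempty (ExtPow R M n ≃ₗ[R]
      (Fin (r.choose n) → R) ×
      Π (k : Fin n) (v : {v : Fin (k.val + 1) → Fin s // StrictMono v}),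
        Fin (r.choose (n - (k.val + 1))) →
          R ⧸ Ideal.span (Set.range fun j => a (v.1 j))) := by
  obtain ⟨f⟩ := hM
  obtain ⟨e⟩ := exteriorPower.nonempty_equiv_prod_pi_quotient (α := Fin r)
    (fun j => Ideal.span {a j}) n
  exact ⟨(ExtPow.equivExteriorPower R M n).trans <| (exteriorPower.congr n f).trans <| e.trans <|
    (LinearEquiv.piCongrRight fun k : Fin (n + 1) =>
      piPowersetCardEquivPiStrictMono R a k r (n - k)).trans <|
    (LinearEquiv.piFinSucc R _).trans <|
    (piStrictMonoZeroEquiv R a _).prodCongr (LinearEquiv.refl R _)⟩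
end

section
/- Let R be a commutative unital ring and A, B two R-modules. For every natural number n there is an R-module isomorphism Λ^n(A ⊕ B) ≅ ⊕_{i+j=n} Λ^i(A) ⊗_R Λ^j(B), induced by concatenation of pure tensors: (a_1 ⊗ ⋯ ⊗ a_i) ⊗ (b_1 ⊗ ⋯ ⊗ b_j) ↦ a_1 ⊗ ⋯ ⊗ a_i ⊗ b_1 ⊗ ⋯ ⊗ b_j. -/
/-!
Concatenation `Λ^i A ⊗ Λ^(n-i) B → Λ^n (A × B)` is well defined because a family with a repeated
vector stays so after concatenation. A left inverse is built from `AlternatingMap.domCoprod` of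
`Λ^i ∘ fst` and `Λ^(n-i) ∘ snd`: evaluated on a concatenated family, a shuffle sending an `A`-slot
to a `B`-slot (or back) feeds a zero coordinate to one of the factors, so only the trivial shuffle
survives, and only in the component with the right number of `A`-slots. For surjectivity, expanding
`v k = ((v k).1, 0) + (0, (v k).2)` writes every generator as a sum of generators of families that
are concatenations up to a permutation of the slots, that is, up to a sign.
-/

open TensorProduct PiTensorProduct

section DomCoprod

open Equiv

variable {R A B N₁ N₂ ιa ιb ιa' ιb' : Type*} [CommRing R] [AddCommGroup A] [Module R A]
  [AddCommGroup B] [Module R B] [AddCommGroup N₁] [Module R N₁] [AddCommGroup N₂] [Module R N₂]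

def sumFamily (x : ιa → A) (y : ιb → B) : ιa ⊕ ιb → A × B :=
  Sum.elim (fun i => (x i, 0)) (fun j => (0, y j))

lemma sumFamily_comp_finSumFinEquiv_symm {p q : ℕ} (x : Fin p → A) (y : Fin q → B) :
    sumFamily x y ∘ finSumFinEquiv.symm = Fin.append (fun i => (x i, 0)) (fun j => (0, y j)) := by
  rw [sumFamily, ← Fin.append_comp_sumElim, Function.comp_assoc]
  exact congrArg _ (funext finSumFinEquiv.apply_symm_apply)

variable [Fintype ιa] [Fintype ιb] [DecidableEq ιa] [DecidableEq ιb]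
  (f : A [⋀^ιa]→ₗ[R] N₁) (g : B [⋀^ιb]→ₗ[R] N₂) (x : ιa' → A) (y : ιb' → B)

lemma domCoprod_summand_sumFamily_eq_zero (σ : Perm (ιa ⊕ ιb)) (π : ιa ⊕ ιb → ιa' ⊕ ιb')
    (hσ : ∃ z, (π (σ z)).isLeft ≠ z.isLeft) :
    AlternatingMap.domCoprod.summand (f.compLinearMap (LinearMap.fst R A B))
      (g.compLinearMap (LinearMap.snd R A B)) (Quotient.mk'' σ) (sumFamily x y ∘ π) = 0 := by
  obtain ⟨z, hz⟩ := hσ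
  rw [AlternatingMap.domCoprod.summand_mk'']
  simp only [smul_apply, MultilinearMap.domDomCongr_apply, MultilinearMap.domCoprod_apply,
    AlternatingMap.coe_multilinearMap, AlternatingMap.compLinearMap_apply]
  rcases z with a | b
  · obtain ⟨b', hb'⟩ : ∃ b', π (σ (.inl a)) = .inr b' := by
      cases h : π (σ (.inl a)) <;> simp_all
    rw [f.map_coord_zero a (by simp [sumFamily, hb']), zero_tmul, smul_zero]
  · obtain ⟨a', ha'⟩ : ∃ a', π (σ (.inr b)) = .inl a' := by
      cases h : π (σ (.inr b)) <;> simp_all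
    rw [g.map_coord_zero b (by simp [sumFamily, ha']), tmul_zero, smul_zero]

lemma domCoprod_sumFamily_comp_eq_zero [Fintype ιa'] (π : ιa ⊕ ιb ≃ ιa' ⊕ ιb')
    (hcard : Fintype.card ιa ≠ Fintype.card ιa') :
    (f.compLinearMap (LinearMap.fst R A B)).domCoprod (g.compLinearMap (LinearMap.snd R A B))
      (sumFamily x y ∘ π) = 0 := by
  rw [AlternatingMap.domCoprod_apply, sum_apply]
  refine Finset.sum_eq_zero fun σ _ => Quotient.inductionOn' σ fun σ => ?_
  refine domCoprod_summand_sumFamily_eq_zero f g x y σ π ?_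
  by_contra! hσ
  exact hcard <| Fintype.card_congr <| Equiv.sumIsLeft.symm.trans <|
    ((σ.trans π).subtypeEquiv fun z => by simp [hσ z]).trans Equiv.sumIsLeft

omit [DecidableEq ιa] [DecidableEq ιb] in
lemma Equiv.Perm.mem_sumCongrHom_range_of_isLeft {σ : Equiv.Perm (ιa ⊕ ιb)}
    (hσ : ∀ z, (σ z).isLeft = z.isLeft) : σ ∈ (Equiv.Perm.sumCongrHom ιa ιb).range := by
  refine Equiv.Perm.mem_sumCongrHom_range_of_perm_mapsTo_inl ?_
  rintro _ ⟨a, rfl⟩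
  obtain ⟨a', ha'⟩ := Sum.isLeft_iff.1 (by simpa using hσ (.inl a))
  exact ⟨a', ha'.symm⟩

lemma domCoprod_sumFamily (x : ιa → A) (y : ιb → B) :
    (f.compLinearMap (LinearMap.fst R A B)).domCoprod (g.compLinearMap (LinearMap.snd R A B))
      (sumFamily x y) = f x ⊗ₜ g y := by
  rw [AlternatingMap.domCoprod_apply, sum_apply]
  refine (Finset.sum_eq_single (Quotient.mk'' 1) (fun σ _ hσ => ?_) (by simp)).trans ?_
  · induction σ using Quotient.inductionOn' with | h σ => ?_
    refine domCoprod_summand_sumFamily_eq_zero f g x y σ id ?_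
    by_contra! hσ'
    refine hσ (Quotient.sound' (QuotientGroup.leftRel_apply.mpr ?_))
    simpa using Subgroup.inv_mem _ (Equiv.Perm.mem_sumCongrHom_range_of_isLeft hσ')
  · rw [AlternatingMap.domCoprod.summand_mk'']
    simp [sumFamily]

end DomCoprod

namespace ExtPow

variable {R M N P : Type*} [CommRing R] [AddCommGroup M] [Module R M] [AddCommGroup N]
  [Module R N] [AddCommGroup P] [Module R P] {n : ℕ}

variable (R M n) in
noncomputable def ι : M [⋀^Fin n]→ₗ[R] ExtPow R M n where
  toMultilinearMap := (ExtRel R M n).mkQ.compMultilinearMap (tprod R)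
  map_eq_zero_of_eq' v i j hv hij :=
    (Submodule.Quotient.mk_eq_zero _).2 (Submodule.subset_span ⟨v, ⟨i, j, hij, hv⟩, rfl⟩)

lemma ι_apply (v : Fin n → M) : ι R M n v = Submodule.Quotient.mk (tprod R v) := rfl

noncomputable def lift (f : M [⋀^Fin n]→ₗ[R] N) : ExtPow R M n →ₗ[R] N :=
  (ExtRel R M n).liftQ (PiTensorProduct.lift f.toMultilinearMap) <| Submodule.span_le.2 <| by
    rintro _ ⟨v, ⟨i, j, hij, hv⟩, rfl⟩
    simpa using f.map_eq_zero_of_eq v hv hij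

@[simp]
lemma lift_ι (f : M [⋀^Fin n]→ₗ[R] N) (v : Fin n → M) : lift f (ι R M n v) = f v := by
  simp [lift, ι_apply]

lemma ext_ι {f g : ExtPow R M n →ₗ[R] N} (h : ∀ v, f (ι R M n v) = g (ι R M n v)) : f = g :=
  Submodule.linearMap_qext _ <| PiTensorProduct.ext <| MultilinearMap.ext h

lemma ext_ι_tmul_ι {p q : ℕ} {f g : ExtPow R M p ⊗[R] ExtPow R N q →ₗ[R] P}
    (h : ∀ x y, f (ι R M p x ⊗ₜ ι R N q y) = g (ι R M p x ⊗ₜ ι R N q y)) : f = g :=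
  TensorProduct.ext <| ext_ι fun x => ext_ι fun y => h x y

variable (R M n) in
lemma span_range_ι : Submodule.span R (Set.range (ι R M n)) = ⊤ := by
  rw [← Submodule.range_mkQ (ExtRel R M n), LinearMap.range_eq_map, ← span_tprod_eq_top,
    Submodule.map_span, ← Set.range_comp]
  rfl

end ExtPow

namespace ExtPow

variable {R A B : Type*} [CommRing R] [AddCommGroup A] [Module R A] [AddCommGroup B] [Module R B]
  {p q n : ℕ}

variable (R) in
noncomputable def tensorConcat (τ : Fin p ⊕ Fin q ≃ Fin n) :
    TensorPower R p A →ₗ[R] TensorPower R q B →ₗ[R] ExtPow R (A × B) n :=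
  ((TensorProduct.mk R _ _).compl₁₂ (PiTensorProduct.map fun _ => LinearMap.inl R A B)
      (PiTensorProduct.map fun _ => LinearMap.inr R A B)).compr₂
    ((ExtRel R (A × B) n).mkQ ∘ₗ (reindex R (fun _ => A × B) τ).toLinearMap ∘ₗ
      (tmulEquiv R (A × B)).toLinearMap)

lemma tensorConcat_tprod (τ : Fin p ⊕ Fin q ≃ Fin n) (x : Fin p → A) (y : Fin q → B) :
    tensorConcat R τ (tprod R x) (tprod R y) = ι R (A × B) n (sumFamily x y ∘ τ.symm) := by
  simp [tensorConcat, ι_apply, sumFamily, Function.comp_def]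

variable (R A B) in
noncomputable def concatPart (τ : Fin p ⊕ Fin q ≃ Fin n) :
    ExtPow R A p ⊗[R] ExtPow R B q →ₗ[R] ExtPow R (A × B) n :=
  TensorProduct.lift <| (tensorConcat R τ).liftQ₂ _ _
    (Submodule.span_le.2 <| by
      rintro _ ⟨x, ⟨i, j, hij, hx⟩, rfl⟩
      refine PiTensorProduct.ext <| MultilinearMap.ext fun y => ?_
      simp only [LinearMap.compMultilinearMap_apply, tensorConcat_tprod, LinearMap.zero_apply]
      exact (ι R (A × B) n).map_eq_zero_of_eq _ (i := τ (.inl i)) (j := τ (.inl j))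
        (by simp [sumFamily, hx]) (by simpa using hij))
    (Submodule.span_le.2 <| by
      rintro _ ⟨y, ⟨i, j, hij, hy⟩, rfl⟩
      refine PiTensorProduct.ext <| MultilinearMap.ext fun x => ?_
      simp only [LinearMap.compMultilinearMap_apply, LinearMap.flip_apply, tensorConcat_tprod,
        LinearMap.zero_apply]
      exact (ι R (A × B) n).map_eq_zero_of_eq _ (i := τ (.inr i)) (j := τ (.inr j))
        (by simp [sumFamily, hy]) (by simpa using hij))

lemma concatPart_ι_tmul_ι (τ : Fin p ⊕ Fin q ≃ Fin n) (x : Fin p → A) (y : Fin q → B) :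
    concatPart R A B τ (ι R A p x ⊗ₜ ι R B q y) = ι R (A × B) n (sumFamily x y ∘ τ.symm) :=
  tensorConcat_tprod τ x y

variable (R A B) in
noncomputable def splitPart (τ : Fin p ⊕ Fin q ≃ Fin n) :
    ExtPow R (A × B) n →ₗ[R] ExtPow R A p ⊗[R] ExtPow R B q :=
  lift <| (((ι R A p).compLinearMap (LinearMap.fst R A B)).domCoprod
    ((ι R B q).compLinearMap (LinearMap.snd R A B))).domDomCongr τ

lemma splitPart_comp_concatPart {p' q' : ℕ} (τ : Fin p ⊕ Fin q ≃ Fin n)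
    (τ' : Fin p' ⊕ Fin q' ≃ Fin n) (h : p' ≠ p) :
    (splitPart R A B τ').comp (concatPart R A B τ) = 0 :=
  ext_ι_tmul_ι fun x y => by
    simpa [splitPart, concatPart_ι_tmul_ι, Function.comp_assoc] using
      domCoprod_sumFamily_comp_eq_zero _ _ x y (τ'.trans τ.symm) (by simpa using h)

lemma splitPart_comp_concatPart_self (τ : Fin p ⊕ Fin q ≃ Fin n) :
    (splitPart R A B τ).comp (concatPart R A B τ) = LinearMap.id :=
  ext_ι_tmul_ι fun x y => by
    simpa [splitPart, concatPart_ι_tmul_ι, Function.comp_assoc] using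
      domCoprod_sumFamily _ _ x y

noncomputable def finSplit (i : Fin (n + 1)) : Fin i ⊕ Fin (n - i) ≃ Fin n :=
  finSumFinEquiv.trans (finCongr (Nat.add_sub_cancel' i.is_le))

lemma sumFamily_comp_finSplit_symm (i : Fin (n + 1)) (x : Fin i → A) (y : Fin (n - i) → B) :
    sumFamily x y ∘ (finSplit i).symm = fun k => Fin.append (fun j => (x j, 0))
      (fun j => (0, y j)) (Fin.cast (Nat.add_sub_cancel' i.is_le).symm k) := by
  rw [← sumFamily_comp_finSumFinEquiv_symm]
  rfl

variable (R A B n)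

noncomputable def concat :
    (Π i : Fin (n + 1), ExtPow R A i ⊗[R] ExtPow R B (n - i)) →ₗ[R] ExtPow R (A × B) n :=
  LinearMap.lsum R _ R fun i => concatPart R A B (finSplit i)

noncomputable def split :
    ExtPow R (A × B) n →ₗ[R] Π i : Fin (n + 1), ExtPow R A i ⊗[R] ExtPow R B (n - i) :=
  LinearMap.pi fun i => splitPart R A B (finSplit i)

variable {R A B n}

lemma concat_single (i : Fin (n + 1)) (z : ExtPow R A i ⊗[R] ExtPow R B (n - i)) :
    concat R A B n (Pi.single i z) = concatPart R A B (finSplit i) z := by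
  rw [concat, LinearMap.lsum_piSingle]

lemma split_comp_concat : (split R A B n).comp (concat R A B n) = LinearMap.id := by
  refine LinearMap.pi_ext' fun i => ?_
  refine ext_ι_tmul_ι (P := Π j : Fin (n + 1), ExtPow R A j ⊗[R] ExtPow R B (n - j))
    fun x y => ?_
  funext j
  simp only [LinearMap.comp_apply, LinearMap.coe_single, concat_single, split, LinearMap.pi_apply,
    LinearMap.id_apply]
  obtain rfl | hji := eq_or_ne j i
  · simp [← LinearMap.comp_apply, splitPart_comp_concatPart_self]
  · rw [← LinearMap.comp_apply, splitPart_comp_concatPart _ _ (Fin.val_ne_of_ne hji),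
      Pi.single_eq_of_ne hji, LinearMap.zero_apply]

lemma ι_sumFamily_mem_range_concat (i : Fin (n + 1)) (τ : Fin i ⊕ Fin (n - i) ≃ Fin n)
    (x : Fin i → A) (y : Fin (n - i) → B) :
    ι R (A × B) n (sumFamily x y ∘ τ.symm) ∈ LinearMap.range (concat R A B n) := by
  have hperm : sumFamily x y ∘ τ.symm =
      (sumFamily x y ∘ (finSplit i).symm) ∘ (τ.symm.trans (finSplit i)) := by
    ext k <;> simp
  rw [hperm, AlternatingMap.map_perm, ← concatPart_ι_tmul_ι, ← concat_single]
  exact Submodule.smul_of_tower_mem _ _ (LinearMap.mem_range_self _ _)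

lemma ι_mem_range_concat (v : Fin n → A × B) :
    ι R (A × B) n v ∈ LinearMap.range (concat R A B n) := by
  classical
  have hv : v = (fun k => ((v k).1, 0)) + (fun k => (0, (v k).2)) := by ext <;> simp
  rw [hv, AlternatingMap.map_add_univ]
  refine Submodule.sum_mem _ fun s _ => ?_
  let τ : Fin s.card ⊕ Fin (n - s.card) ≃ Fin n :=
    finSumEquivOfFinset rfl (by simp [Finset.card_compl])
  have hs : s.piecewise (fun k => ((v k).1, 0)) (fun k => (0, (v k).2)) =
      sumFamily (fun j => (v (τ (.inl j))).1) (fun j => (v (τ (.inr j))).2) ∘ τ.symm := by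
    funext k
    obtain ⟨z, rfl⟩ := τ.surjective k
    rcases z with j | j
    · rw [Finset.piecewise_eq_of_mem _ _ _ (by simp [τ, Finset.orderEmbOfFin_mem])]
      simp [sumFamily]
    · rw [Finset.piecewise_eq_of_notMem _ _ _ (by simpa [τ] using sᶜ.orderEmbOfFin_mem _ j)]
      simp [sumFamily]
  rw [hs]
  exact ι_sumFamily_mem_range_concat ⟨s.card, Nat.lt_succ_of_le (card_finset_fin_le s)⟩ τ _ _

lemma concat_surjective : Function.Surjective (concat R A B n) := by
  rw [← LinearMap.range_eq_top, eq_top_iff, ← span_range_ι, Submodule.span_le]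
  rintro _ ⟨v, rfl⟩
  exact ι_mem_range_concat v

end ExtPow

/-- For `R`-modules `A`, `B` and `n : ℕ`, there is an `R`-module isomorphism
`Λ^n(A ⊕ B) ≅ ⊕_{i+j=n} Λ^i(A) ⊗_R Λ^j(B)` induced by concatenation of pure tensors
`(a_1⊗⋯⊗a_i) ⊗ (b_1⊗⋯⊗b_j) ↦ a_1⊗⋯⊗a_i⊗b_1⊗⋯⊗b_j`.
The index set `{(i,j) : i+j=n}` is encoded as `i : Fin (n+1)` with `j = n - i`. -/
theorem extPower_prod (R A B : Type) [CommRing R] [AddCommGroup A] [Module R A]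
    [AddCommGroup B] [Module R B] (n : ℕ) :
    ∃ e : (Π i : Fin (n + 1),
          ExtPow R A i.val ⊗[R] ExtPow R B (n - i.val)) ≃ₗ[R] ExtPow R (A × B) n,
      ∀ (i : Fin (n + 1)) (x : Fin i.val → A) (y : Fin (n - i.val) → B),
        e (Pi.single i
            (Submodule.Quotient.mk (tprod R x) ⊗ₜ[R] Submodule.Quotient.mk (tprod R y)))
          = Submodule.Quotient.mk (tprod R fun k : Fin n =>
              Fin.append (fun j => ((x j, 0) : A × B)) (fun j => ((0, y j) : A × B))
                (Fin.cast (Nat.add_sub_cancel' (Nat.lt_succ_iff.mp i.isLt)).symm k)) := by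
  have hinj : Function.Injective (ExtPow.concat R A B n) :=
    Function.LeftInverse.injective (g := ExtPow.split R A B n)
      (LinearMap.congr_fun ExtPow.split_comp_concat)
  refine ⟨.ofBijective _ ⟨hinj, ExtPow.concat_surjective⟩, fun i x y => ?_⟩
  change ExtPow.concat R A B n _ = _
  rw [← ExtPow.ι_apply, ← ExtPow.ι_apply, ExtPow.concat_single,
    ExtPow.concatPart_ι_tmul_ι, ExtPow.sumFamily_comp_finSplit_symm, ExtPow.ι_apply]
end

section
/- Let R be a commutative unital ring, let r, s be natural numbers, and let a_1, ..., a_s ∈ R. If M is an R-module with M ≅ R^r ⊕ ⊕_{i=1}^s R/Ra_i, then the exterior algebra Λ(M) = ⊕_{n∈ℕ} Λ^n(M), with multiplication given by concatenation of pure tensors, is isomorphic as an R-algebra to the quotient of the exterior algebra Λ(R^{r+s}) on r+s free generators x_1, ..., x_r, y_1, ..., y_s by the two-sided ideal generated by the elements a_1·y_1, ..., a_s·y_s. -/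
open TensorProduct

namespace Stmt11Aux

variable (R : Type) [CommRing R] (r s : ℕ) (a : Fin s → R)

/-- The relation defining the quotient. -/
abbrev Rel (x y : ExteriorAlgebra R (Fin r ⊕ Fin s → R)) : Prop :=
  (∃ i : Fin s, x = a i • ExteriorAlgebra.ι R (Pi.single (Sum.inr i) 1)) ∧ y = 0

/-- The canonical surjection from the free module to `R^r × Π R/a_i`. -/
noncomputable def π0 :
    (Fin r ⊕ Fin s → R) →ₗ[R]
      (Fin r → R) × (Π i : Fin s, R ⧸ Ideal.span {a i}) :=
  LinearMap.prod (LinearMap.funLeft R R Sum.inl)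
    (LinearMap.pi fun i => (Ideal.span {a i}).mkQ ∘ₗ LinearMap.proj (Sum.inr i))

lemma π0_apply (v : Fin r ⊕ Fin s → R) :
    π0 R r s a v = (fun j => v (Sum.inl j),
      fun i => Submodule.Quotient.mk (v (Sum.inr i))) := rfl

/-- the degree-one generator `y_i` inside the quotient -/
noncomputable def Y (i : Fin s) : RingQuot (Rel R r s a) :=
  RingQuot.mkAlgHom R (Rel R r s a) (ExteriorAlgebra.ι R (Pi.single (Sum.inr i) 1))

lemma aY (i : Fin s) : a i • Y R r s a i = 0 := by
  have h : Rel R r s a (a i • ExteriorAlgebra.ι R (Pi.single (Sum.inr i) 1)) 0 :=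
    ⟨⟨i, rfl⟩, rfl⟩
  have := RingQuot.mkAlgHom_rel R h
  simpa [Y, map_smul] using this

/-- inclusion of the left factor -/
def inclL : (Fin r → R) →ₗ[R] (Fin r ⊕ Fin s → R) where
  toFun v := Sum.elim v 0
  map_add' u v := by funext j; cases j <;> simp
  map_smul' c v := by funext j; cases j <;> simp

/-- inclusion of the right factor -/
def inclR : (Fin s → R) →ₗ[R] (Fin r ⊕ Fin s → R) where
  toFun v := Sum.elim 0 v
  map_add' u v := by funext j; cases j <;> simp
  map_smul' c v := by funext j; cases j <;> simp

lemma inclL_add_inclR (x : Fin r → R) (c : Fin s → R) :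
    inclL R r s x + inclR R r s c = Sum.elim x c := by
  funext j; cases j <;> simp [inclL, inclR]

lemma inclR_eq_sum (c : Fin s → R) :
    inclR R r s c = ∑ i, c i • (Pi.single (Sum.inr i) (1 : R) : Fin r ⊕ Fin s → R) := by
  funext j
  cases j with
  | inl j =>
    simp only [inclR, LinearMap.coe_mk, AddHom.coe_mk, Sum.elim_inl,
      Finset.sum_apply, Pi.smul_apply, Pi.zero_apply]
    rw [Finset.sum_eq_zero]
    intro i _
    rw [Pi.single_eq_of_ne (by simp) 1, smul_zero]
  | inr k =>
    simp only [inclR, LinearMap.coe_mk, AddHom.coe_mk, Sum.elim_inr,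
      Finset.sum_apply, Pi.smul_apply]
    rw [Finset.sum_eq_single k]
    · rw [Pi.single_eq_same, smul_eq_mul, mul_one]
    · intro i _ hik
      rw [Pi.single_eq_of_ne (by simpa using Ne.symm hik) 1, smul_zero]
    · intro h; exact absurd (Finset.mem_univ k) h

/-- left part of the map `R^r × Π R/a_i → RingQuot` -/
noncomputable def ψ1 : (Fin r → R) →ₗ[R] RingQuot (Rel R r s a) :=
  (RingQuot.mkAlgHom R (Rel R r s a)).toLinearMap ∘ₗ
    (ExteriorAlgebra.ι R) ∘ₗ inclL R r s

/-- component map on `R/a_i` sending `[c]` to `c • y_i` -/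
noncomputable def ψ2i (i : Fin s) :
    (R ⧸ Ideal.span {a i}) →ₗ[R] RingQuot (Rel R r s a) :=
  Submodule.liftQ _ (LinearMap.toSpanSingleton R _ (Y R r s a i)) (by
    rw [Ideal.span_le]
    rintro x hx
    obtain rfl : x = a i := hx
    simpa [LinearMap.mem_ker, LinearMap.toSpanSingleton_apply] using aY R r s a i)

/-- the candidate degree-one map `R^r × Π R/a_i → RingQuot` -/
noncomputable def ψ :
    ((Fin r → R) × (Π i : Fin s, R ⧸ Ideal.span {a i})) →ₗ[R]
      RingQuot (Rel R r s a) :=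
  ψ1 R r s a ∘ₗ LinearMap.fst R _ _ +
    (∑ i, ψ2i R r s a i ∘ₗ LinearMap.proj i) ∘ₗ LinearMap.snd R _ _

lemma ψ_elim (x : Fin r → R) (c : Fin s → R) :
    ψ R r s a (x, fun i => Submodule.Quotient.mk (c i)) =
      RingQuot.mkAlgHom R (Rel R r s a) (ExteriorAlgebra.ι R (Sum.elim x c)) := by
  have h2 : ∀ i : Fin s,
      ψ2i R r s a i (Submodule.Quotient.mk (c i)) = c i • Y R r s a i := fun i => rfl
  calc ψ R r s a (x, fun i => Submodule.Quotient.mk (c i))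
      = ψ1 R r s a x + ∑ i, ψ2i R r s a i (Submodule.Quotient.mk (c i)) := by
        simp [ψ, LinearMap.sum_apply]
    _ = RingQuot.mkAlgHom R (Rel R r s a) (ExteriorAlgebra.ι R (inclL R r s x))
          + ∑ i, c i • Y R r s a i := by
        rw [Finset.sum_congr rfl fun i _ => h2 i]; rfl
    _ = RingQuot.mkAlgHom R (Rel R r s a) (ExteriorAlgebra.ι R (inclL R r s x))
          + RingQuot.mkAlgHom R (Rel R r s a) (ExteriorAlgebra.ι R (inclR R r s c)) := by
        rw [inclR_eq_sum]
        simp [Y, map_sum, map_smul]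
    _ = RingQuot.mkAlgHom R (Rel R r s a) (ExteriorAlgebra.ι R (Sum.elim x c)) := by
        rw [← map_add, ← map_add, inclL_add_inclR]

lemma ψ_surj_lift (n : (Fin r → R) × (Π i : Fin s, R ⧸ Ideal.span {a i})) :
    ∃ v : Fin r ⊕ Fin s → R,
      ψ R r s a n = RingQuot.mkAlgHom R (Rel R r s a) (ExteriorAlgebra.ι R v) ∧
        π0 R r s a v = n := by
  obtain ⟨x, q⟩ := n
  choose c hc using fun i => Submodule.Quotient.mk_surjective (Ideal.span {a i}) (q i)
  refine ⟨Sum.elim x c, ?_, ?_⟩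
  · have : q = fun i => Submodule.Quotient.mk (c i) := by
      funext i; exact (hc i).symm
    rw [this, ψ_elim]
  · rw [π0_apply]
    refine Prod.ext rfl ?_
    funext i
    simpa using hc i

lemma ψ_π0 (v : Fin r ⊕ Fin s → R) :
    ψ R r s a (π0 R r s a v) =
      RingQuot.mkAlgHom R (Rel R r s a) (ExteriorAlgebra.ι R v) := by
  rw [π0_apply, ψ_elim]
  congr 1
  congr 1
  funext j; cases j <;> rfl

lemma smul_π0_single (i : Fin s) :
    a i • π0 R r s a (Pi.single (Sum.inr i) (1 : R)) = 0 := by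
  rw [π0_apply, Prod.smul_mk, Prod.mk_eq_zero]
  constructor
  · funext j
    simp [Pi.single_eq_of_ne (show (Sum.inl j : Fin r ⊕ Fin s) ≠ Sum.inr i by simp)]
  · funext k
    by_cases hk : k = i
    · subst hk
      simp only [Pi.smul_apply, Pi.single_eq_same, Pi.zero_apply]
      rw [← Submodule.Quotient.mk_smul, Submodule.Quotient.mk_eq_zero, smul_eq_mul, mul_one]
      exact Ideal.mem_span_singleton_self (a k)
    · simp [Pi.single_eq_of_ne (show (Sum.inr k : Fin r ⊕ Fin s) ≠ Sum.inr i by simpa using hk)]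

end Stmt11Aux

open Stmt11Aux in
/-- Let `R` be a commutative unital ring, `a_1, …, a_s ∈ R`, and `M` an
`R`-module with `M ≅ R^r ⊕ ⊕_{i=1}^s R/Ra_i`.  Then the exterior algebra
`Λ(M) = ⊕_{n∈ℕ} Λ^n(M)` is isomorphic as an `R`-algebra to the quotient of the exterior
algebra `Λ(R^{r+s})` on `r+s` free generators `x_1,…,x_r,y_1,…,y_s` by the two-sided
ideal generated by `a_1·y_1, …, a_s·y_s` (expressed as the `RingQuot` by the relations
`a_i·y_i = 0`, where `y_i` is the degree-one generator `ι (Pi.single (Sum.inr i) 1)`). -/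
theorem exteriorAlgebra_presentation
    (R : Type) [CommRing R] (r s : ℕ) (a : Fin s → R)
    (M : Type) [AddCommGroup M] [Module R M]
    (hM : Nonempty (M ≃ₗ[R] (Fin r → R) × (Π i : Fin s, R ⧸ Ideal.span {a i}))) :
    Nonempty (ExteriorAlgebra R M ≃ₐ[R]
      RingQuot (fun x y : ExteriorAlgebra R (Fin r ⊕ Fin s → R) =>
        (∃ i : Fin s, x = a i • ExteriorAlgebra.ι R (Pi.single (Sum.inr i) 1)) ∧
        y = 0)) := by
  obtain ⟨e⟩ := hM
  -- the projection from the free module onto `M`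
  let π : (Fin r ⊕ Fin s → R) →ₗ[R] M := e.symm.toLinearMap ∘ₗ π0 R r s a
  -- the algebra map from the quotient to `Λ M`
  let f : RingQuot (Rel R r s a) →ₐ[R] ExteriorAlgebra R M :=
    RingQuot.liftAlgHom R ⟨ExteriorAlgebra.map π, by
      rintro x y ⟨⟨i, rfl⟩, rfl⟩
      have h0 : a i • π0 R r s a (Pi.single (Sum.inr i) 1) = 0 := smul_π0_single R r s a i
      simp only [map_smul, map_zero, ExteriorAlgebra.map_apply_ι, LinearMap.coe_comp,
        Function.comp_apply, LinearEquiv.coe_coe, π]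
      rw [← map_smul (ExteriorAlgebra.ι R), ← map_smul e.symm, h0, map_zero, map_zero]⟩
  -- the degree-one map `M → RingQuot`
  let φ : M →ₗ[R] RingQuot (Rel R r s a) := ψ R r s a ∘ₗ e.toLinearMap
  have hφ : ∀ m : M, φ m * φ m = 0 := by
    intro m
    obtain ⟨v, hv, -⟩ := ψ_surj_lift R r s a (e m)
    show ψ R r s a (e m) * ψ R r s a (e m) = 0
    rw [hv, ← map_mul, ExteriorAlgebra.ι_sq_zero, map_zero]
  let g : ExteriorAlgebra R M →ₐ[R] RingQuot (Rel R r s a) :=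
    ExteriorAlgebra.lift R ⟨φ, hφ⟩
  have hf_mk : ∀ v : Fin r ⊕ Fin s → R,
      f (RingQuot.mkAlgHom R (Rel R r s a) (ExteriorAlgebra.ι R v)) = ExteriorAlgebra.ι R (π v) := by
    intro v
    rw [show f (RingQuot.mkAlgHom R (Rel R r s a) (ExteriorAlgebra.ι R v))
        = ExteriorAlgebra.map π (ExteriorAlgebra.ι R v) from
      RingQuot.liftAlgHom_mkAlgHom_apply _ _ _ _, ExteriorAlgebra.map_apply_ι]
  have hgf : g.comp f = AlgHom.id R _ := by
    apply RingQuot.ringQuot_ext'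
    apply ExteriorAlgebra.hom_ext
    refine LinearMap.ext fun v => ?_
    simp only [LinearMap.coe_comp, Function.comp_apply, AlgHom.toLinearMap_apply,
      AlgHom.coe_comp, AlgHom.coe_id, id_eq]
    rw [hf_mk]
    show ExteriorAlgebra.lift R ⟨φ, hφ⟩ (ExteriorAlgebra.ι R (π v)) = _
    rw [ExteriorAlgebra.lift_ι_apply]
    show ψ R r s a (e (e.symm (π0 R r s a v))) = _
    rw [e.apply_symm_apply, ψ_π0]
  have hfg : f.comp g = AlgHom.id R _ := by
    apply ExteriorAlgebra.hom_ext
    refine LinearMap.ext fun m => ?_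
    simp only [LinearMap.coe_comp, Function.comp_apply, AlgHom.toLinearMap_apply,
      AlgHom.coe_comp, AlgHom.coe_id, id_eq]
    show f (ExteriorAlgebra.lift R ⟨φ, hφ⟩ (ExteriorAlgebra.ι R m)) = ExteriorAlgebra.ι R m
    rw [ExteriorAlgebra.lift_ι_apply]
    show f (ψ R r s a (e m)) = _
    obtain ⟨v, hv, hπv⟩ := ψ_surj_lift R r s a (e m)
    rw [hv, hf_mk]
    have : π v = m := by
      show e.symm (π0 R r s a v) = m
      rw [hπv, e.symm_apply_apply]
    rw [this]
  exact ⟨AlgEquiv.ofAlgHom g f hgf hfg⟩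
end

section
/- Let R be a commutative unital ring and r ≥ 1, n ≥ 1 natural numbers. The n-th cyclic power of the free module R^r is free of rank equal to the necklace number: T^n_C(R^r) ≅ R^{c_{r,n}}, where c_{r,n} = (1/n) ∑_{d | n} φ(d) · r^{n/d} and φ is Euler's totient function. -/
open TensorProduct PiTensorProduct

/-- The submodule of cyclic-rotation relations in the `n`-th tensor power:
`m_1⊗m_2⊗⋯⊗m_n − m_2⊗⋯⊗m_n⊗m_1`. -/
abbrev CycRel (R : Type*) [CommRing R] (M : Type*) [AddCommGroup M] [Module R M] (n : ℕ) :
    Submodule R (TensorPower R n M) :=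
  Submodule.span R {x | ∃ m : Fin n → M,
    x = tprod R m - tprod R (fun i => m (finRotate n i))}

/-- The `n`-th cyclic power `T^n_C M`. -/
abbrev CycPow (R : Type*) [CommRing R] (M : Type*) [AddCommGroup M] [Module R M] (n : ℕ) :=
  TensorPower R n M ⧸ CycRel R M n

/-!
A basis `e` of `M` gives the basis `e_w = e_{w 0} ⊗ ⋯ ⊗ e_{w (n-1)}` of `T^n M`, indexed by words
`w : Fin n → ι`, and rotating tensor factors permutes it by rotating words. The cyclic relations
span the image of `1 - ρ` for this rotation `ρ`, and the coinvariants of a basis permutation are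
free on its orbits; here the orbits are the necklaces. Burnside's lemma counts them: rotation by
`a` fixes the `r ^ (n / ord a)` words that are constant on the cosets of `⟨a⟩`, and exactly
`φ d` rotations have order `d`.
-/

open Module

-- `G` acts on `A → B` by `(g +ᵥ F) a = F (-g +ᵥ a)`; words `Fin n → ι` are rotated this way.
attribute [local instance] arrowAddAction

theorem AddAction.apply_vadd_eq_of_mem_zmultiples {G X Y : Type*} [AddGroup G] [AddAction G X]
    {f : X → Y} {g₀ : G} (hf : ∀ x, f (g₀ +ᵥ x) = f x) {g : G}
    (hg : g ∈ AddSubgroup.zmultiples g₀) (x : X) : f (g +ᵥ x) = f x := by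
  have hg₀ : g₀ ∈ AddAction.stabilizer G f :=
    funext fun y => show f (-g₀ +ᵥ y) = f y by rw [← hf, vadd_neg_vadd]
  have hg' : -g ∈ AddAction.stabilizer G f := neg_mem (AddSubgroup.zmultiples_le.mpr hg₀ hg)
  have := congrFun hg' x
  change f (-(-g) +ᵥ x) = f x at this
  rwa [neg_neg] at this

namespace Module.Basis

variable {G X R P : Type*} [AddGroup G] [AddAction G X] [Ring R] [AddCommGroup P] [Module R P]

variable (G) (b : Basis X R P)

noncomputable def orbitRepr : P →ₗ[R] (AddAction.orbitRel.Quotient G X →₀ R) :=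
  Finsupp.lmapDomain R R (Quotient.mk _) ∘ₗ b.repr

theorem orbitRepr_self (x : X) : b.orbitRepr G (b x) = Finsupp.single ⟦x⟧ 1 := by
  simp [orbitRepr]

variable {G b} {ρ : P →ₗ[R] P} {g₀ : G}

theorem range_id_sub_le_ker_orbitRepr (hρ : ∀ x, ρ (b x) = b (g₀ +ᵥ x)) :
    LinearMap.range (LinearMap.id - ρ) ≤ LinearMap.ker (b.orbitRepr G) := by
  have hinv : b.orbitRepr G ∘ₗ ρ = b.orbitRepr G := b.ext fun x => by
    simp only [LinearMap.comp_apply, hρ, orbitRepr_self]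
    exact congrArg (Finsupp.single · 1) (Quotient.sound (AddAction.mem_orbit x g₀))
  rw [LinearMap.range_le_ker_iff, LinearMap.comp_sub, hinv, LinearMap.comp_id]
  exact sub_self (b.orbitRepr G)

theorem mkQ_apply_vadd (hρ : ∀ x, ρ (b x) = b (g₀ +ᵥ x))
    (hg₀ : ∀ g : G, g ∈ AddSubgroup.zmultiples g₀) (g : G) (x : X) :
    (LinearMap.range (LinearMap.id - ρ)).mkQ (b (g +ᵥ x)) =
      (LinearMap.range (LinearMap.id - ρ)).mkQ (b x) := by
  refine AddAction.apply_vadd_eq_of_mem_zmultiples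
    (f := fun x => (LinearMap.range (LinearMap.id - ρ)).mkQ (b x)) (fun y => ?_) (hg₀ g) x
  refine ((Submodule.Quotient.eq _).mpr (LinearMap.mem_range.mpr ⟨b y, ?_⟩)).symm
  simp [hρ]

noncomputable def coinvariantsEquiv (hρ : ∀ x, ρ (b x) = b (g₀ +ᵥ x))
    (hg₀ : ∀ g : G, g ∈ AddSubgroup.zmultiples g₀) :
    (P ⧸ LinearMap.range (LinearMap.id - ρ)) ≃ₗ[R] (AddAction.orbitRel.Quotient G X →₀ R) :=
  LinearEquiv.ofLinearMap
    ((LinearMap.range _).liftQ (b.orbitRepr G) (range_id_sub_le_ker_orbitRepr hρ))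
    (Finsupp.linearCombination R <| Quotient.lift (fun x => (LinearMap.range _).mkQ (b x))
      fun _ y ⟨g, hg⟩ => hg ▸ mkQ_apply_vadd hρ hg₀ g y)
    (Finsupp.lhom_ext fun o c => by
      induction o using Quotient.inductionOn
      rw [LinearMap.comp_apply, Finsupp.linearCombination_single, Quotient.lift_mk, map_smul,
        Submodule.mkQ_apply, Submodule.liftQ_apply, orbitRepr_self, Finsupp.smul_single_one,
        LinearMap.id_apply])
    (Submodule.linearMap_qext _ <| b.ext fun x => by
      rw [LinearMap.id_comp, LinearMap.comp_apply, LinearMap.comp_apply, Submodule.mkQ_apply,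
        Submodule.liftQ_apply, orbitRepr_self, Finsupp.linearCombination_single, one_smul,
        Quotient.lift_mk, Submodule.mkQ_apply])

end Module.Basis

open Nat in
theorem IsAddCyclic.sum_addOrderOf {G M : Type*} [AddGroup G] [Fintype G] [IsAddCyclic G]
    [AddCommMonoid M] (f : ℕ → M) :
    ∑ a : G, f (addOrderOf a) = ∑ d ∈ (Nat.card G).divisors, φ d • f d := by
  classical
  rw [← Finset.sum_fiberwise_of_maps_to (t := (Nat.card G).divisors) (g := addOrderOf)
    fun a _ => Nat.mem_divisors.mpr ⟨addOrderOf_dvd_natCard a, Nat.card_pos.ne'⟩]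
  refine Finset.sum_congr rfl fun d hd => ?_
  rw [Nat.card_eq_fintype_card] at hd
  rw [Finset.sum_congr rfl fun a ha => congrArg f (Finset.mem_filter.mp ha).2, Finset.sum_const,
    IsAddCyclic.card_addOrderOf_eq_totient (Nat.dvd_of_mem_divisors hd)]

section Necklaces

variable {G α : Type*} [AddCommGroup G]

def fixedByEquivQuotient (a : G) :
    AddAction.fixedBy (G → α) a ≃ (G ⧸ AddSubgroup.zmultiples a → α) where
  toFun w := Quotient.lift (w : G → α) fun x y hxy => by
    have hw : ∀ x, (w : G → α) (-a +ᵥ x) = (w : G → α) x := congrFun w.2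
    have hxy : -x + y ∈ AddSubgroup.zmultiples (-a) := by
      rw [AddSubgroup.zmultiples_neg]
      exact QuotientAddGroup.leftRel_apply.mp hxy
    rw [← AddAction.apply_vadd_eq_of_mem_zmultiples hw hxy x, vadd_eq_add, add_comm,
      add_neg_cancel_left]
  invFun f := ⟨f ∘ (↑), funext fun x => congrArg f <| QuotientAddGroup.eq.mpr <| by simp⟩
  left_inv _ := rfl
  right_inv f := funext fun x => Quotient.inductionOn x fun _ => rfl

theorem card_fixedBy_fun [Finite G] (a : G) :
    Nat.card (AddAction.fixedBy (G → α) a) = Nat.card α ^ (Nat.card G / addOrderOf a) := by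
  rw [Nat.card_congr (fixedByEquivQuotient a), Nat.card_fun, ← AddSubgroup.index_eq_card,
    ← Nat.card_zmultiples, ← (AddSubgroup.zmultiples a).card_mul_index,
    Nat.mul_div_cancel_left _ Nat.card_pos]

open Nat in
theorem card_mul_card_orbitRel_quotient_fun [Finite G] [IsAddCyclic G] [Finite α] :
    Nat.card G * Nat.card (AddAction.orbitRel.Quotient G (G → α)) =
      ∑ d ∈ (Nat.card G).divisors, φ d * Nat.card α ^ (Nat.card G / d) := by
  classical
  have := Fintype.ofFinite G
  have := Fintype.ofFinite α
  have := Fintype.ofFinite (AddAction.orbitRel.Quotient G (G → α))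
  have burnside := AddAction.sum_card_fixedBy_eq_card_orbits_mul_card_addGroup G (G → α)
  simp only [Fintype.card_eq_nat_card, card_fixedBy_fun] at burnside
  rw [IsAddCyclic.sum_addOrderOf (fun d => Nat.card α ^ (Nat.card G / d))] at burnside
  rw [mul_comm]
  exact burnside.symm

end Necklaces

theorem Fin.mem_zmultiples_one {n : ℕ} (k : Fin (n + 1)) : k ∈ AddSubgroup.zmultiples 1 := by
  induction k using Fin.induction with
  | zero => exact zero_mem _
  | succ i hi => exact Fin.coeSucc_eq_succ (a := i) ▸ add_mem hi (AddSubgroup.mem_zmultiples 1)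

instance Fin.isAddCyclic (n : ℕ) : IsAddCyclic (Fin (n + 1)) := ⟨⟨1, Fin.mem_zmultiples_one⟩⟩

section CyclicPower

variable {R M : Type*} [CommRing R] [AddCommGroup M] [Module R M]

noncomputable def TensorPower.rotate (n : ℕ) : TensorPower R n M ≃ₗ[R] TensorPower R n M :=
  PiTensorProduct.reindex R (fun _ => M) (finRotate n).symm

theorem TensorPower.rotate_tprod {n : ℕ} (m : Fin n → M) :
    TensorPower.rotate n (tprod R m) = tprod R fun i => m (finRotate n i) := by
  simp [TensorPower.rotate]

theorem cycRel_eq_range (n : ℕ) :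
    CycRel R M n = LinearMap.range (LinearMap.id - (TensorPower.rotate n).toLinearMap) := by
  rw [LinearMap.range_eq_map, ← PiTensorProduct.span_tprod_eq_top, ← Submodule.span_image]
  refine congrArg (Submodule.span R) (Set.ext fun x => ?_)
  simp [TensorPower.rotate_tprod, eq_comm]

theorem TensorPower.rotate_basis {ι : Type*} (b : Basis ι R M) {n : ℕ} (w : Fin (n + 1) → ι) :
    TensorPower.rotate (n + 1) (Basis.piTensorProduct (fun _ => b) w) =
      Basis.piTensorProduct (fun _ => b) ((-1 : Fin (n + 1)) +ᵥ w) := by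
  simp only [Basis.piTensorProduct_apply, TensorPower.rotate_tprod, finRotate_apply]
  congr! 3 with i
  show w (i + 1) = w (-(-1) + i)
  rw [neg_neg, add_comm]

noncomputable def cyclicPowerEquiv {ι : Type*} (b : Basis ι R M) (n : ℕ) :
    CycPow R M (n + 1) ≃ₗ[R] (AddAction.orbitRel.Quotient (Fin (n + 1)) (Fin (n + 1) → ι) →₀ R) :=
  (Submodule.quotEquivOfEq _ _ (cycRel_eq_range _)).trans <|
    (Basis.piTensorProduct fun _ => b).coinvariantsEquiv (TensorPower.rotate_basis b)
      fun k => AddSubgroup.zmultiples_neg (g := (1 : Fin (n + 1))) ▸ Fin.mem_zmultiples_one k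

end CyclicPower

theorem cyclicPower_free_module_general (R : Type) [CommRing R] (r n : ℕ)
    (hn : 1 ≤ n) :
    ∃ c : ℕ, n * c = ∑ d ∈ n.divisors, Nat.totient d * r ^ (n / d) ∧
      Nonempty (CycPow R (Fin r → R) n ≃ₗ[R] (Fin c → R)) := by
  obtain ⟨n, rfl⟩ := Nat.exists_eq_add_of_le' hn
  refine ⟨Nat.card (AddAction.orbitRel.Quotient (Fin (n + 1)) (Fin (n + 1) → Fin r)), ?_, ⟨?_⟩⟩
  · simpa using card_mul_card_orbitRel_quotient_fun (G := Fin (n + 1)) (α := Fin r)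
  · exact (cyclicPowerEquiv (Pi.basisFun R (Fin r)) n).trans <|
      (Finsupp.linearEquivFunOnFinite R R _).trans
        (LinearEquiv.funCongrLeft R R (Finite.equivFin _).symm)

/-- Let `R` be a commutative unital ring and `r, n ≥ 1`.  The `n`-th cyclic
power of the free module `R^r` is free of rank the necklace number
`c_{r,n} = (1/n) ∑_{d ∣ n} φ(d) r^{n/d}`:  `T^n_C(R^r) ≅ R^{c_{r,n}}`. -/
theorem cyclicPower_free_module (R : Type) [CommRing R] (r n : ℕ) (hr : 1 ≤ r)
    (hn : 1 ≤ n) :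
    ∃ c : ℕ, n * c = ∑ d ∈ n.divisors, Nat.totient d * r ^ (n / d) ∧
      Nonempty (CycPow R (Fin r → R) n ≃ₗ[R] (Fin c → R)) :=
  cyclicPower_free_module_general R r n hn
end

section
/- Let R be a commutative unital ring and r ≥ 1, n ≥ 1 natural numbers. The n-th dihedral power of the free module R^r is free of rank equal to the bracelet number: T^n_D(R^r) ≅ R^{d_{r,n}}, where d_{r,n} = c_{r,n}/2 + (r+1)·r^{n/2}/4 if n is even and d_{r,n} = c_{r,n}/2 + r^{(n+1)/2}/2 if n is odd, with c_{r,n} = (1/n) ∑_{d | n} φ(d) · r^{n/d} the necklace number and φ Euler's totient function. -/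
open TensorProduct PiTensorProduct

/-- The submodule of dihedral relations in the `n`-th tensor power:
`m_1⊗m_2⊗⋯⊗m_n − m_2⊗⋯⊗m_n⊗m_1` (cyclic rotation) together with
`m_1⊗m_2⊗⋯⊗m_n − m_n⊗⋯⊗m_2⊗m_1` (reversal). -/
abbrev DihRel (R : Type*) [CommRing R] (M : Type*) [AddCommGroup M] [Module R M] (n : ℕ) :
    Submodule R (TensorPower R n M) :=
  Submodule.span R
    ({x | ∃ m : Fin n → M, x = tprod R m - tprod R (fun i => m (finRotate n i))} ∪
     {x | ∃ m : Fin n → M, x = tprod R m - tprod R (fun i => m i.rev)})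

/-- The `n`-th dihedral power `T^n_D M`. -/
abbrev DihPow (R : Type*) [CommRing R] (M : Type*) [AddCommGroup M] [Module R M] (n : ℕ) :=
  TensorPower R n M ⧸ DihRel R M n

/-!
Let `b` be a basis of `M` indexed by `ι`. The pure tensors `b (f 0) ⊗ ⋯ ⊗ b (f (n-1))` for
words `f : Fin n → ι` form a basis of `T^n M`, and the span of the `tprod m - tprod (m ∘ σ)`
equals the span of the basis differences for the words `f` and `f ∘ σ`, since both are the range
of `id - reindex σ⁻¹`. Hence `T^n_D M` is free on the classes of words modulo rotation and
reversal, that is on the orbits of the dihedral group `D_n` acting on `ZMod n → ι`.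

For `ι` of size `r` these orbits are counted by Burnside's lemma. The rotation by `k` fixes
`r ^ gcd(n, k)` words, and summing over `k` gives `n` times the number of necklaces `c`. The
reflection `x ↦ k - x` fixes `r ^ q_k` words, where `2 q_k = n + #{x | 2x = k}`; that count is
`1` for odd `n`, while for even `n` it is `0` or `2`, and it is `2` for exactly half of the `k`.
-/

open Module Finset Function

namespace Module.Basis

variable {ι R M : Type*} [CommRing R] [AddCommGroup M] [Module R M]

noncomputable def quotientSpanSubEquiv (b : Basis ι R M) (rel : ι → ι → Prop) :
    (M ⧸ Submodule.span R {x | ∃ i j, rel i j ∧ x = b i - b j}) ≃ₗ[R]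
      (Quotient (Relation.EqvGen.setoid rel) →₀ R) := by
  set N := Submodule.span R {x | ∃ i j, rel i j ∧ x = b i - b j}
  have hN : N ≤ LinearMap.ker
      (Finsupp.lmapDomain R R (Quotient.mk (Relation.EqvGen.setoid rel)) ∘ₗ
        b.repr.toLinearMap) := by
    refine Submodule.span_le.mpr ?_
    rintro _ ⟨i, j, hij, rfl⟩
    have hij' : Quotient.mk (Relation.EqvGen.setoid rel) i = Quotient.mk _ j :=
      Quotient.sound (Relation.EqvGen.rel i j hij)
    simp [Finsupp.mapDomain_sub, hij']
  have hwd : Relation.EqvGen.setoid rel ≤ Setoid.ker (N.mkQ ∘ b) :=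
    Setoid.eqvGen_le fun i j hij =>
      (Submodule.Quotient.eq N).mpr (Submodule.subset_span ⟨i, j, hij, rfl⟩)
  refine LinearEquiv.ofLinearMap (N.liftQ _ hN)
    (Finsupp.linearCombination R (Quotient.lift (N.mkQ ∘ b) hwd)) ?_ ?_
  · refine Finsupp.lhom_ext fun q c => Quotient.inductionOn q fun i => ?_
    simp
  · refine Submodule.linearMap_qext _ (b.ext fun i => ?_)
    simp

end Module.Basis

def DihedralStep (n : ℕ) (ι : Type*) (f g : Fin n → ι) : Prop :=
  g = (fun i => f (finRotate n i)) ∨ g = fun i => f i.rev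

section DihedralPower

variable {ι R M : Type*} [CommRing R] [AddCommGroup M] [Module R M] {n : ℕ}

theorem span_tprod_sub_perm_eq_span_basis (b : Basis ι R M) (σ : Equiv.Perm (Fin n)) :
    Submodule.span R {x | ∃ m : Fin n → M, x = tprod R m - tprod R fun i => m (σ i)} =
      Submodule.span R {x | ∃ f : Fin n → ι, x = Basis.piTensorProduct (fun _ => b) f -
        Basis.piTensorProduct (fun _ => b) fun i => f (σ i)} := by
  set L : TensorPower R n M →ₗ[R] TensorPower R n M :=
    LinearMap.id - (reindex R (fun _ => M) σ.symm).toLinearMap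
  have hL : ∀ m, L (tprod R m) = tprod R m - tprod R fun i => m (σ i) := by
    simp [L, reindex_tprod]
  have htprod : {x | ∃ m : Fin n → M, x = tprod R m - tprod R fun i => m (σ i)} =
      L '' Set.range (tprod R) := by
    ext x
    simp [hL, eq_comm]
  have hbasis : {x | ∃ f : Fin n → ι, x = Basis.piTensorProduct (fun _ => b) f -
      Basis.piTensorProduct (fun _ => b) fun i => f (σ i)} =
      L '' Set.range (Basis.piTensorProduct fun _ => b) := by
    ext x
    simp [Basis.piTensorProduct_apply, hL, eq_comm]
  rw [htprod, hbasis, Submodule.span_image, Submodule.span_image, span_tprod_eq_top,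
    Basis.span_eq]

theorem dihRel_eq_span_basis_sub (b : Basis ι R M) :
    DihRel R M n = Submodule.span R {x | ∃ f g, DihedralStep n ι f g ∧
      x = Basis.piTensorProduct (fun _ => b) f - Basis.piTensorProduct (fun _ => b) g} := by
  have hrev := span_tprod_sub_perm_eq_span_basis b (Fin.revPerm (n := n))
  simp only [Fin.revPerm_apply] at hrev
  rw [DihRel, Submodule.span_union, span_tprod_sub_perm_eq_span_basis b, hrev,
    ← Submodule.span_union]
  congr 1
  ext x
  constructor
  · rintro (⟨f, rfl⟩ | ⟨f, rfl⟩)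
    exacts [⟨f, _, Or.inl rfl, rfl⟩, ⟨f, _, Or.inr rfl, rfl⟩]
  · rintro ⟨f, g, rfl | rfl, rfl⟩
    exacts [Or.inl ⟨f, rfl⟩, Or.inr ⟨f, rfl⟩]

noncomputable def Module.Basis.dihPowEquivFinsupp (b : Basis ι R M) :
    DihPow R M n ≃ₗ[R] (Quotient (Relation.EqvGen.setoid (DihedralStep n ι)) →₀ R) :=
  (Submodule.quotEquivOfEq _ _ (dihRel_eq_span_basis_sub b)).trans
    ((Basis.piTensorProduct fun _ => b).quotientSpanSubEquiv _)

end DihedralPower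

section Involution

variable {α : Type*} {σ : α → α}

def Function.Involutive.orbitSetoid (hσ : Involutive σ) : Setoid α where
  r x y := y = x ∨ y = σ x
  iseqv :=
    { refl _ := Or.inl rfl
      symm := by
        rintro _ _ (rfl | rfl)
        exacts [Or.inl rfl, Or.inr (hσ _).symm]
      trans := by
        rintro _ _ _ (rfl | rfl) (rfl | rfl)
        exacts [Or.inl rfl, Or.inr rfl, Or.inr rfl, Or.inl (hσ _)] }

theorem Function.Involutive.two_mul_card_quotient_orbitSetoid [Fintype α] [DecidableEq α]
    (hσ : Involutive σ) :
    2 * Nat.card (Quotient hσ.orbitSetoid) = Fintype.card α + #{x | σ x = x} := by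
  classical
  set s := hσ.orbitSetoid
  -- Every class has total weight 2: two points moved by `σ`, or one fixed point counted twice.
  let weight : α → ℕ := fun x => 1 + if σ x = x then 1 else 0
  have hclass : ∀ a : α, ({x | Quotient.mk s x = Quotient.mk s a} : Finset α) = {a, σ a} := by
    intro a
    ext x
    simp [s, Quotient.eq, orbitSetoid, eq_comm]
  have hweight : ∀ q : Quotient s, ∑ x with Quotient.mk s x = q, weight x = 2 :=
    Quotient.ind fun a => by
      rw [hclass]
      by_cases h : σ a = a
      · simp [weight, h]
      · rw [sum_pair (Ne.symm h)]
        simp [weight, h, Ne.symm h, hσ a]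
  calc 2 * Nat.card (Quotient s) = ∑ q : Quotient s, ∑ x with Quotient.mk s x = q, weight x := by
        simp [hweight, Nat.card_eq_fintype_card, mul_comm]
    _ = ∑ x, weight x := sum_fiberwise univ _ weight
    _ = Fintype.card α + #{x | σ x = x} := by simp [weight, sum_add_distrib, sum_boole]

end Involution

theorem Setoid.card_subtype_le_ker {α β : Type*} [Finite α] (s : Setoid α) :
    Nat.card {f : α → β // s ≤ Setoid.ker f} = Nat.card β ^ Nat.card (Quotient s) := by
  rw [Nat.card_congr (Setoid.liftEquiv s), Nat.card_fun]

@[to_additive]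
theorem MulAction.sum_natCard_fixedBy (G X : Type*) [Group G] [Fintype G] [MulAction G X]
    [Finite X] :
    ∑ g : G, Nat.card (fixedBy X g) = Nat.card (orbitRel.Quotient G X) * Nat.card G := by
  classical
  have := Fintype.ofFinite X
  simpa only [Nat.card_eq_fintype_card] using sum_card_fixedBy_eq_card_orbits_mul_card_group G X

theorem MulAction.orbitRel_eq_eqvGen_of_closure_eq_top {G X : Type*} [Group G] [MulAction G X]
    {S : Set G} (hS : Subgroup.closure S = ⊤) :
    orbitRel G X = Relation.EqvGen.setoid fun x y => ∃ g ∈ S, y = g • x := by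
  set step : X → X → Prop := fun x y => ∃ g ∈ S, y = g • x
  refine le_antisymm ?_ (Setoid.eqvGen_le fun x _ ⟨g, _, hy⟩ => hy ▸ mem_orbit_smul g x)
  have hreach : ∀ g : G, ∀ x : X, Relation.EqvGen step x (g • x) := fun g =>
    Subgroup.closure_induction (p := fun g _ => ∀ x : X, Relation.EqvGen step x (g • x))
      (fun g hg x => .rel _ _ ⟨g, hg, rfl⟩)
      (fun x => by rw [one_smul]; exact .refl x)
      (fun g h _ _ hg hh x => by rw [mul_smul]; exact .trans _ _ _ (hh x) (hg (h • x)))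
      (fun g _ hg x => by simpa using (hg (g⁻¹ • x)).symm)
      (hS ▸ Subgroup.mem_top g)
  rintro x y ⟨g, rfl⟩
  exact (hreach g y).symm

theorem Nat.sum_range_gcd_eq_sum_divisors {M : Type*} [AddCommMonoid M] {n : ℕ} (hn : n ≠ 0)
    (f : ℕ → M) : ∑ k ∈ range n, f (n.gcd k) = ∑ e ∈ n.divisors, Nat.totient e • f (n / e) := by
  have hgcd : ∀ k ∈ range n, n.gcd k ∈ n.divisors :=
    fun k _ => Nat.mem_divisors.mpr ⟨Nat.gcd_dvd_left _ _, hn⟩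
  rw [← sum_fiberwise_of_maps_to hgcd, ← Nat.sum_div_divisors n]
  refine sum_congr rfl fun d hd => ?_
  have hdn : d ∣ n := Nat.dvd_of_mem_divisors hd
  rw [sum_congr rfl fun k hk => by rw [(mem_filter.mp hk).2], sum_const,
    ← Nat.totient_div_of_dvd (Nat.div_dvd_of_dvd hdn), Nat.div_div_self hdn hn]

namespace ZMod

variable {n : ℕ}

theorem sum_comp_val {M : Type*} [AddCommMonoid M] [NeZero n] (f : ℕ → M) :
    ∑ k : ZMod n, f k.val = ∑ k ∈ range n, f k := by
  obtain ⟨m, rfl⟩ := Nat.exists_eq_succ_of_ne_zero (NeZero.ne n)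
  exact Fin.sum_univ_eq_sum_range f (m + 1)

theorem card_quotient_zmultiples [NeZero n] (k : ZMod n) :
    Nat.card (ZMod n ⧸ AddSubgroup.zmultiples k) = n.gcd k.val := by
  have hord : addOrderOf k = n / n.gcd k.val := by
    conv_lhs => rw [← natCast_zmod_val k]
    exact addOrderOf_coe _ (NeZero.ne n)
  have hindex := (AddSubgroup.zmultiples k).index_mul_card
  rw [Nat.card_zmultiples, hord, Nat.card_zmod] at hindex
  have hg : n.gcd k.val ∣ n := Nat.gcd_dvd_left _ _
  have hpos : 0 < n / n.gcd k.val :=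
    Nat.div_pos (Nat.gcd_le_left _ (NeZero.pos n)) (Nat.gcd_pos_of_pos_left _ (NeZero.pos n))
  rw [← Nat.div_div_self hg (NeZero.ne n), ← Nat.eq_div_of_mul_eq_left hpos.ne' hindex]
  rfl

theorem two_mul_card_quotient_const_sub [NeZero n] (k : ZMod n) :
    2 * Nat.card (Quotient (const_sub_involutive k).orbitSetoid) =
      n + #{x : ZMod n | 2 • x = k} := by
  rw [Involutive.two_mul_card_quotient_orbitSetoid, ZMod.card]
  congr 2
  ext x
  simp only [mem_filter, mem_univ, true_and, sub_eq_iff_eq_add, two_nsmul]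
  exact eq_comm

theorem card_two_nsmul_eq_of_odd [NeZero n] (hn : Odd n) (k : ZMod n) :
    #{x : ZMod n | 2 • x = k} = 1 := by
  set u := unitOfCoprime 2 (Nat.coprime_two_left.mpr hn)
  refine card_eq_one.mpr ⟨u⁻¹ * k, ?_⟩
  ext x
  simp [u, nsmul_eq_mul, Units.eq_inv_mul_iff_mul_eq]

theorem card_two_nsmul_eq_zero_or_two [NeZero n] (hn : Even n) (k : ZMod n) :
    #{x : ZMod n | 2 • x = k} = 0 ∨ #{x : ZMod n | 2 • x = k} = 2 := by
  by_cases hk : k ∈ Set.range (nsmulAddMonoidHom 2 : ZMod n →+ ZMod n)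
  · right
    have hfiber := AddMonoidHom.card_fiber_eq_of_mem_range _ hk ⟨0, map_zero _⟩
    simp only [nsmulAddMonoidHom_apply] at hfiber
    rw [hfiber]
    obtain ⟨t, ht⟩ := hn
    have hpos := NeZero.pos n
    have hhalf : (t : ZMod n) ≠ 0 := by
      rw [Ne, natCast_eq_zero_iff]
      exact Nat.not_dvd_of_pos_of_lt (by omega) (by omega)
    refine le_antisymm (IsAddCyclic.card_nsmul_eq_zero_le two_pos) ?_
    calc 2 = #{0, (t : ZMod n)} := (card_pair hhalf.symm).symm
      _ ≤ _ := card_le_card fun x hx => by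
        rcases mem_insert.mp hx with rfl | hx
        · simp
        · rw [mem_singleton.mp hx, mem_filter, two_nsmul, ← Nat.cast_add, ← ht, natCast_self]
          exact ⟨mem_univ _, rfl⟩
  · left
    exact card_eq_zero.mpr (filter_eq_empty_iff.mpr fun x _ hx => hk ⟨x, hx⟩)

variable {β : Type*}

instance : AddAction (ZMod n) (ZMod n → β) where
  vadd i w x := w (x + i)
  zero_vadd w := funext fun x => congrArg w (add_zero x)
  add_vadd i j w := funext fun x => congrArg w (by ring)

theorem card_fixedBy_vadd [NeZero n] (k : ZMod n) :
    Nat.card (AddAction.fixedBy (ZMod n → β) k) = Nat.card β ^ n.gcd k.val := by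
  have hfixed : ∀ w : ZMod n → β, w ∈ AddAction.fixedBy (ZMod n → β) k ↔
      QuotientAddGroup.leftRel (AddSubgroup.zmultiples k) ≤ Setoid.ker w := by
    refine fun w => ⟨fun hw a b hab => ?_, fun hw => funext fun x => (@hw x (x + k) ?_).symm⟩
    · obtain ⟨z, hz⟩ := AddSubgroup.mem_zmultiples_iff.mp (QuotientAddGroup.leftRel_apply.mp hab)
      have hper : Periodic w k := congrFun hw
      rw [Setoid.ker_def, show b = a + z • k by rw [hz]; abel, hper.zsmul z]
    · simp [QuotientAddGroup.leftRel_apply]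
  rw [Nat.card_congr (Equiv.subtypeEquivRight hfixed), Setoid.card_subtype_le_ker,
    ← card_quotient_zmultiples]
  rfl

end ZMod

namespace DihedralGroup

variable {n : ℕ} {β : Type*}

instance : MulAction (DihedralGroup n) (ZMod n → β) where
  smul
    | r i, w => fun x => w (x + i)
    | sr i, w => fun x => w (i - x)
  one_smul w := funext fun x => congrArg w (add_zero x)
  mul_smul g h w := by cases g <;> cases h <;> funext x <;> exact congrArg w (by ring)

theorem closure_r_one_sr_eq_top [NeZero n] (i : ZMod n) :
    Subgroup.closure {r 1, sr i} = (⊤ : Subgroup (DihedralGroup n)) := by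
  have hr : ∀ k, r k ∈ Subgroup.closure {r (1 : ZMod n), sr i} := fun k => by
    rw [← ZMod.natCast_zmod_val k, ← r_one_pow]
    exact Subgroup.pow_mem _ (Subgroup.subset_closure (by simp)) _
  refine eq_top_iff.mpr fun g _ => ?_
  rcases g with k | k
  · exact hr k
  · rw [show sr k = sr i * r (k - i) by simp [sr_mul_r]]
    exact Subgroup.mul_mem _ (Subgroup.subset_closure (by simp)) (hr _)

theorem card_fixedBy_r [NeZero n] (k : ZMod n) :
    Nat.card (MulAction.fixedBy (ZMod n → β) (r k)) = Nat.card β ^ n.gcd k.val :=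
  ZMod.card_fixedBy_vadd k

theorem card_fixedBy_sr [NeZero n] (k : ZMod n) :
    Nat.card (MulAction.fixedBy (ZMod n → β) (sr k)) =
      Nat.card β ^ Nat.card (Quotient (const_sub_involutive k).orbitSetoid) := by
  have hfixed : ∀ w : ZMod n → β, w ∈ MulAction.fixedBy (ZMod n → β) (sr k) ↔
      (const_sub_involutive k).orbitSetoid ≤ Setoid.ker w := by
    refine fun w => ⟨fun hw a b hab => ?_,
      fun hw => funext fun x => (@hw x (k - x) (Or.inr rfl)).symm⟩
    rcases hab with rfl | rfl
    exacts [rfl, (congrFun hw a).symm]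
  rw [Nat.card_congr (Equiv.subtypeEquivRight hfixed), Setoid.card_subtype_le_ker]

end DihedralGroup

section Bracelets

open DihedralGroup

variable {n : ℕ} [NeZero n]

theorem sum_pow_card_quotient_const_sub_of_odd (hn : Odd n) (r : ℕ) :
    ∑ k : ZMod n, r ^ Nat.card (Quotient (const_sub_involutive k).orbitSetoid) =
      n * r ^ ((n + 1) / 2) := by
  have hclasses : ∀ k : ZMod n,
      Nat.card (Quotient (const_sub_involutive k).orbitSetoid) = (n + 1) / 2 := fun k => by
    have := ZMod.two_mul_card_quotient_const_sub k
    rw [ZMod.card_two_nsmul_eq_of_odd hn] at this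
    omega
  simp [hclasses, ZMod.card]

theorem two_mul_sum_pow_card_quotient_const_sub_of_even (hn : Even n) (r : ℕ) :
    2 * ∑ k : ZMod n, r ^ Nat.card (Quotient (const_sub_involutive k).orbitSetoid) =
      n * (r + 1) * r ^ (n / 2) := by
  obtain ⟨t, ht⟩ := hn
  -- As the fixed-point count `F` is `0` or `2`, this identity is linear in `F`: summing it over
  -- `k` only needs `∑ F = n`.
  have hstep : ∀ k : ZMod n,
      2 * r ^ Nat.card (Quotient (const_sub_involutive k).orbitSetoid) +
        #{x : ZMod n | 2 • x = k} * r ^ t =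
          2 * r ^ t + #{x : ZMod n | 2 • x = k} * r ^ (t + 1) := by
    intro k
    have hclasses := ZMod.two_mul_card_quotient_const_sub k
    rcases ZMod.card_two_nsmul_eq_zero_or_two ⟨t, ht⟩ k with hF | hF <;> rw [hF] at hclasses ⊢
    · rw [show Nat.card (Quotient (const_sub_involutive k).orbitSetoid) = t by omega]
      ring
    · rw [show Nat.card (Quotient (const_sub_involutive k).orbitSetoid) = t + 1 by omega]
      ring
  have hfibers : ∑ k : ZMod n, #{x : ZMod n | 2 • x = k} = n := by
    rw [← card_eq_sum_card_fiberwise fun x _ => mem_univ (2 • x), card_univ, ZMod.card]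
  have hsum := sum_congr rfl fun k (_ : k ∈ univ) => hstep k
  simp only [sum_add_distrib, ← mul_sum, ← sum_mul, hfibers, sum_const, card_univ, ZMod.card,
    smul_eq_mul, pow_succ] at hsum
  rw [show n / 2 = t by omega]
  linarith

theorem mul_card_necklaces (β : Type*) [Finite β] :
    n * Nat.card (AddAction.orbitRel.Quotient (ZMod n) (ZMod n → β)) =
      ∑ e ∈ n.divisors, Nat.totient e * Nat.card β ^ (n / e) := by
  have hburnside := AddAction.sum_natCard_fixedBy (ZMod n) (ZMod n → β)
  simp only [ZMod.card_fixedBy_vadd, Nat.card_zmod] at hburnside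
  rw [mul_comm, ← hburnside, ZMod.sum_comp_val fun k => Nat.card β ^ n.gcd k,
    Nat.sum_range_gcd_eq_sum_divisors (NeZero.ne n)]
  simp only [smul_eq_mul]

theorem card_bracelets_mul (β : Type*) [Finite β] :
    Nat.card (MulAction.orbitRel.Quotient (DihedralGroup n) (ZMod n → β)) * (2 * n) =
      Nat.card (AddAction.orbitRel.Quotient (ZMod n) (ZMod n → β)) * n +
        ∑ k : ZMod n, Nat.card β ^ Nat.card (Quotient (const_sub_involutive k).orbitSetoid) := by
  have hdihedral := MulAction.sum_natCard_fixedBy (DihedralGroup n) (ZMod n → β)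
  have hcyclic := AddAction.sum_natCard_fixedBy (ZMod n) (ZMod n → β)
  rw [DihedralGroup.nat_card] at hdihedral
  rw [Nat.card_zmod] at hcyclic
  rw [← hdihedral, ← hcyclic, ← equivSum.symm.sum_comp, Fintype.sum_sum_type]
  change ∑ k, Nat.card (MulAction.fixedBy _ (r k)) + ∑ k, Nat.card (MulAction.fixedBy _ (sr k)) = _
  simp only [card_fixedBy_r, ZMod.card_fixedBy_vadd, card_fixedBy_sr]

theorem four_mul_card_bracelets_of_even (β : Type*) [Finite β] (hn : Even n) :
    4 * Nat.card (MulAction.orbitRel.Quotient (DihedralGroup n) (ZMod n → β)) =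
      2 * Nat.card (AddAction.orbitRel.Quotient (ZMod n) (ZMod n → β)) +
        (Nat.card β + 1) * Nat.card β ^ (n / 2) := by
  have hburnside := card_bracelets_mul (n := n) β
  have hreflections := two_mul_sum_pow_card_quotient_const_sub_of_even hn (Nat.card β)
  refine Nat.eq_of_mul_eq_mul_left (NeZero.pos n) ?_
  linear_combination 2 * hburnside + hreflections

theorem two_mul_card_bracelets_of_odd (β : Type*) [Finite β] (hn : Odd n) :
    2 * Nat.card (MulAction.orbitRel.Quotient (DihedralGroup n) (ZMod n → β)) =
      Nat.card (AddAction.orbitRel.Quotient (ZMod n) (ZMod n → β)) +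
        Nat.card β ^ ((n + 1) / 2) := by
  have hburnside := card_bracelets_mul (n := n) β
  rw [sum_pow_card_quotient_const_sub_of_odd hn] at hburnside
  refine Nat.eq_of_mul_eq_mul_left (NeZero.pos n) ?_
  linear_combination hburnside

end Bracelets

-- The two sides live on `Fin (m + 1) → β` and `ZMod (m + 1) → β`, which agree by definition.
theorem eqvGen_dihedralStep_eq_orbitRel (m : ℕ) (β : Type*) :
    Relation.EqvGen.setoid (DihedralStep (m + 1) β) =
      MulAction.orbitRel (DihedralGroup (m + 1)) (ZMod (m + 1) → β) := by
  have hrot : ∀ w : ZMod (m + 1) → β,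
      DihedralGroup.r (n := m + 1) 1 • w = fun i => w (finRotate (m + 1) i) :=
    fun w => funext fun i => congrArg w (finRotate_apply i).symm
  have hrev : ∀ w : ZMod (m + 1) → β,
      DihedralGroup.sr (n := m + 1) (Fin.last m) • w = fun i : Fin (m + 1) => w i.rev :=
    fun w => funext fun i => congrArg w (Fin.last_sub i)
  rw [MulAction.orbitRel_eq_eqvGen_of_closure_eq_top
    (DihedralGroup.closure_r_one_sr_eq_top (n := m + 1) (Fin.last m))]
  congr 1
  ext w w'
  simp only [DihedralStep, Set.mem_insert_iff, Set.mem_singleton_iff, exists_eq_or_imp,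
    exists_eq_left]
  rw [hrot w, hrev w]
  exact Iff.rfl

theorem dihedralPower_free_module_general (R : Type) [CommRing R] (r n : ℕ)
    (hn : 1 ≤ n) :
    ∃ c d : ℕ, n * c = ∑ e ∈ n.divisors, Nat.totient e * r ^ (n / e) ∧
      (Even n → 4 * d = 2 * c + (r + 1) * r ^ (n / 2)) ∧
      (Odd n → 2 * d = c + r ^ ((n + 1) / 2)) ∧
      Nonempty (DihPow R (Fin r → R) n ≃ₗ[R] (Fin d → R)) := by
  obtain ⟨m, rfl⟩ : ∃ m, n = m + 1 := ⟨n - 1, by omega⟩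
  have hcard : Nat.card (Quotient (Relation.EqvGen.setoid (DihedralStep (m + 1) (Fin r)))) =
      Nat.card (MulAction.orbitRel.Quotient (DihedralGroup (m + 1)) (ZMod (m + 1) → Fin r)) := by
    rw [eqvGen_dihedralStep_eq_orbitRel]
    rfl
  refine ⟨_, _, by simpa using mul_card_necklaces (n := m + 1) (Fin r), fun h => ?_, fun h => ?_,
    ⟨(Pi.basisFun R (Fin r)).dihPowEquivFinsupp.trans
      ((Finsupp.linearEquivFunOnFinite R R _).trans
        (LinearEquiv.funCongrLeft R R (Finite.equivFin _).symm))⟩⟩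
  · simpa [hcard] using four_mul_card_bracelets_of_even (Fin r) h
  · simpa [hcard] using two_mul_card_bracelets_of_odd (Fin r) h

/-- Let `R` be a commutative unital ring and `r, n ≥ 1`.  The `n`-th
dihedral power of the free module `R^r` is free of rank the bracelet number `d_{r,n}`,
where `d_{r,n} = c_{r,n}/2 + (r+1)·r^{n/2}/4` if `n` is even and
`d_{r,n} = c_{r,n}/2 + r^{(n+1)/2}/2` if `n` is odd, with
`c_{r,n} = (1/n) ∑_{d ∣ n} φ(d) r^{n/d}` the necklace number:
`T^n_D(R^r) ≅ R^{d_{r,n}}`. -/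
theorem dihedralPower_free_module (R : Type) [CommRing R] (r n : ℕ) (hr : 1 ≤ r)
    (hn : 1 ≤ n) :
    ∃ c d : ℕ, n * c = ∑ e ∈ n.divisors, Nat.totient e * r ^ (n / e) ∧
      (Even n → 4 * d = 2 * c + (r + 1) * r ^ (n / 2)) ∧
      (Odd n → 2 * d = c + r ^ ((n + 1) / 2)) ∧
      Nonempty (DihPow R (Fin r → R) n ≃ₗ[R] (Fin d → R)) :=
  dihedralPower_free_module_general R r n hn
end

section
/- Let R be a commutative unital ring, r ≥ 1 and n ≥ 1 natural numbers, and G ≤ S_n a subgroup of the symmetric group on n letters. Let G act on the set of functions [r]^{[n]} = {f : {1,...,n} → {1,...,r}} by (π.f)(i) = f(π.i), and let g_{r,n} denote the number of orbits of this action. Then the n-th G-power of the free module R^r is free of rank g_{r,n}: T^n_G(R^r) ≅ R^{g_{r,n}}. More generally, for any ideal I ⊴ R, T^n_G((R/I)^r) ≅ (R/I)^{g_{r,n}}. -/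
open TensorProduct PiTensorProduct

/-- The submodule of relations in the `n`-th tensor power induced by a subgroup
`G ≤ S_n`. -/
abbrev GRel (R : Type*) [CommRing R] (M : Type*) [AddCommGroup M] [Module R M] (n : ℕ)
    (G : Subgroup (Equiv.Perm (Fin n))) : Submodule R (TensorPower R n M) :=
  Submodule.span R {x | ∃ (m : Fin n → M) (π : Equiv.Perm (Fin n)), π ∈ G ∧
    x = tprod R (fun i => m (π i)) - tprod R m}

/-- The `n`-th `G`-power
`T^n_G M = T^n M / ⟨m_{π1}⊗⋯⊗m_{πn} − m_1⊗⋯⊗m_n : π ∈ G⟩`. -/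
abbrev GPow (R : Type*) [CommRing R] (M : Type*) [AddCommGroup M] [Module R M] (n : ℕ)
    (G : Subgroup (Equiv.Perm (Fin n))) :=
  TensorPower R n M ⧸ GRel R M n G

/-!
Summing the coordinates `∏ i, m i (f i)` of a pure tensor over each `G`-orbit of multi-indices
`f : Fin n → ι` kills the `G`-relations, so it gives a map `T^n_G(S^ι) → (Orbits G ι → S)`.
Its inverse sends the indicator of the orbit of `f`, with value `s`, to the class of
`e_{f 0} ⊗ ⋯ ⊗ e_{f (n-1)}` with `s` put into one factor. Because `R → S` is surjective,
`S`-scalars move freely between the factors; hence these tensors span `T^n(S^ι)`, and permuting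
their factors by `π ∈ G` only replaces `f` by `f ∘ π` in the same orbit.
-/

theorem GPow.mk_tprod_comp {R M : Type*} [CommRing R] [AddCommGroup M] [Module R M] {n : ℕ}
    {G : Subgroup (Equiv.Perm (Fin n))} {π : Equiv.Perm (Fin n)} (hπ : π ∈ G) (m : Fin n → M) :
    (Submodule.Quotient.mk (tprod R (m ∘ π)) : GPow R M n G) =
      Submodule.Quotient.mk (tprod R m) :=
  (Submodule.Quotient.eq _).2 (Submodule.subset_span ⟨m, π, hπ, rfl⟩)

variable {R S : Type*} [CommRing R] [CommRing S] [Algebra R S]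
  {n : ℕ} {G : Subgroup (Equiv.Perm (Fin n))} {ι : Type*}

variable (G ι) in
abbrev Orbits := Quot fun f f' : Fin n → ι => ∃ π ∈ G, f ∘ π = f'

variable [Fintype ι]

section OrbitCoeffs

variable [DecidableEq (Orbits G ι)]

variable (R S G) in
noncomputable def orbitCoeffs : TensorPower R n (ι → S) →ₗ[R] (Orbits G ι → S) :=
  lift <| ∑ f : Fin n → ι, (LinearMap.single R (fun _ => S) (Quot.mk _ f)).compMultilinearMap
    ((MultilinearMap.mkPiAlgebra R (Fin n) S).compLinearMap fun i => LinearMap.proj (f i))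

theorem orbitCoeffs_tprod (m : Fin n → ι → S) :
    orbitCoeffs R S G (tprod R m) = ∑ f, Pi.single (Quot.mk _ f) (∏ i, m i (f i)) := by
  simp [orbitCoeffs]

theorem orbitCoeffs_tprod_comp {π : Equiv.Perm (Fin n)} (hπ : π ∈ G) (m : Fin n → ι → S) :
    orbitCoeffs R S G (tprod R (m ∘ π)) = orbitCoeffs R S G (tprod R m) := by
  rw [orbitCoeffs_tprod, orbitCoeffs_tprod]
  refine Fintype.sum_equiv (Equiv.arrowCongr π (Equiv.refl ι)) _ _ fun f => ?_
  have hf : (Quot.mk _ (f ∘ π.symm) : Orbits G ι) = Quot.mk _ f :=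
    Quot.sound ⟨π, hπ, by ext; simp⟩
  rw [show Equiv.arrowCongr π (Equiv.refl ι) f = f ∘ π.symm from rfl, hf]
  congr 1
  refine Eq.trans ?_ (Equiv.prod_comp π fun j => m j (f (π.symm j)))
  simp

theorem GRel_le_ker_orbitCoeffs : GRel R (ι → S) n G ≤ LinearMap.ker (orbitCoeffs R S G) := by
  rw [Submodule.span_le]
  rintro x ⟨m, π, hπ, rfl⟩
  simp only [SetLike.mem_coe, LinearMap.mem_ker, map_sub]
  exact sub_eq_zero.2 (orbitCoeffs_tprod_comp hπ m)

end OrbitCoeffs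

variable [DecidableEq ι]

variable (S) in
def unitTuple (f : Fin n → ι) : Fin n → ι → S := fun i => Pi.single (f i) 1

omit [Fintype ι] in
theorem prod_unitTuple_apply (f f' : Fin n → ι) :
    ∏ i, unitTuple S f i (f' i) = if f' = f then 1 else 0 := by
  simp [unitTuple, Pi.single_apply, Finset.prod_boole, funext_iff]

section SingleTensor

variable [NeZero n]

variable (R) in
noncomputable def singleTensor (f : Fin n → ι) : S →ₗ[R] TensorPower R n (ι → S) :=
  (PiTensorProduct.tprod R).toLinearMap (unitTuple S f) 0 ∘ₗ
    LinearMap.single R (fun _ => S) (f 0)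

omit [Fintype ι] in
theorem singleTensor_algebraMap (f : Fin n → ι) (c : R) :
    singleTensor R f (algebraMap R S c) = c • tprod R (unitTuple S f) := by
  have : Pi.single (f 0) (algebraMap R S c) = c • unitTuple S f 0 := by
    rw [unitTuple, ← Pi.single_smul', Algebra.algebraMap_eq_smul_one]
  simp only [singleTensor, LinearMap.comp_apply, LinearMap.coe_single,
    MultilinearMap.toLinearMap_apply, this, MultilinearMap.map_update_smul, Function.update_eq_self]

variable (hS : Function.Surjective (algebraMap R S))
include hS

theorem tprod_eq_sum_singleTensor (m : Fin n → ι → S) :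
    tprod R m = ∑ f : Fin n → ι, singleTensor R f (∏ i, m i (f i)) := by
  choose c hc using fun i j => hS (m i j)
  have hm : m = fun i => ∑ j, c i j • Pi.single j 1 := by
    ext i k
    simp [← hc, Pi.single_apply, Algebra.smul_def]
  conv_lhs => rw [hm, MultilinearMap.map_sum]
  refine Finset.sum_congr rfl fun f _ => ?_
  rw [MultilinearMap.map_smul_univ]
  simp only [← hc, ← map_prod, singleTensor_algebraMap]
  rfl

omit [Fintype ι] in
theorem mkQ_singleTensor_comp {π : Equiv.Perm (Fin n)} (hπ : π ∈ G) (f : Fin n → ι) :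
    (GRel R (ι → S) n G).mkQ ∘ₗ singleTensor R (f ∘ π) =
      (GRel R (ι → S) n G).mkQ ∘ₗ singleTensor R f := by
  ext s
  obtain ⟨c, rfl⟩ := hS s
  simp only [LinearMap.comp_apply, singleTensor_algebraMap, map_smul, Submodule.mkQ_apply]
  rw [show unitTuple S (f ∘ π) = unitTuple S f ∘ π from rfl, GPow.mk_tprod_comp hπ]

theorem orbitCoeffs_singleTensor [DecidableEq (Orbits G ι)] (f : Fin n → ι) (s : S) :
    orbitCoeffs R S G (singleTensor R f s) = Pi.single (Quot.mk _ f) s := by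
  obtain ⟨c, rfl⟩ := hS s
  rw [singleTensor_algebraMap, map_smul, orbitCoeffs_tprod]
  simp only [prod_unitTuple_apply, apply_ite (Pi.single _), Pi.single_zero, Finset.sum_ite_eq',
    Finset.mem_univ, if_true]
  rw [← Pi.single_smul', Algebra.algebraMap_eq_smul_one]

end SingleTensor

namespace GPow

variable (R S G) in
noncomputable def toOrbitFun [DecidableEq (Orbits G ι)] :
    GPow R (ι → S) n G →ₗ[R] (Orbits G ι → S) :=
  (GRel R (ι → S) n G).liftQ (orbitCoeffs R S G) GRel_le_ker_orbitCoeffs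

variable [NeZero n] [Fintype (Orbits G ι)] [DecidableEq (Orbits G ι)]
  (hS : Function.Surjective (algebraMap R S))

noncomputable def ofOrbitFun : (Orbits G ι → S) →ₗ[R] GPow R (ι → S) n G :=
  LinearMap.lsum R (fun _ => S) R fun q =>
    Quot.lift (fun f => (GRel R (ι → S) n G).mkQ ∘ₗ singleTensor R f)
      (by rintro f _ ⟨π, hπ, rfl⟩; exact (mkQ_singleTensor_comp hS hπ f).symm) q

omit [Fintype ι] in
theorem ofOrbitFun_single (f : Fin n → ι) (s : S) :
    ofOrbitFun hS (Pi.single (Quot.mk _ f) s) =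
      Submodule.Quotient.mk (p := GRel R (ι → S) n G) (singleTensor R f s) :=
  LinearMap.lsum_piSingle ..

theorem ofOrbitFun_comp_toOrbitFun :
    ofOrbitFun (ι := ι) hS ∘ₗ toOrbitFun R S G = LinearMap.id := by
  refine Submodule.linearMap_qext _ (PiTensorProduct.ext <| MultilinearMap.ext fun m => ?_)
  simp only [toOrbitFun, LinearMap.compMultilinearMap_apply, LinearMap.comp_apply,
    Submodule.mkQ_apply, Submodule.liftQ_apply, orbitCoeffs_tprod, map_sum, ofOrbitFun_single,
    LinearMap.id_apply]
  rw [tprod_eq_sum_singleTensor hS m]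
  exact (map_sum (GRel R (ι → S) n G).mkQ _ _).symm

theorem toOrbitFun_comp_ofOrbitFun :
    toOrbitFun R S G ∘ₗ ofOrbitFun (ι := ι) hS = LinearMap.id := by
  refine LinearMap.pi_ext fun q s => ?_
  induction q using Quot.ind with | mk f => ?_
  rw [LinearMap.comp_apply, ofOrbitFun_single, toOrbitFun, Submodule.liftQ_apply,
    orbitCoeffs_singleTensor hS, LinearMap.id_apply]

noncomputable def equivOrbitFun : GPow R (ι → S) n G ≃ₗ[R] (Orbits G ι → S) :=
  .ofLinearMap (toOrbitFun R S G) (ofOrbitFun hS) (toOrbitFun_comp_ofOrbitFun hS)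
    (ofOrbitFun_comp_toOrbitFun hS)

end GPow

theorem gPower_free_module_general (R : Type) [CommRing R] (r n : ℕ) (hn : 1 ≤ n)
    (G : Subgroup (Equiv.Perm (Fin n))) :
    Nonempty (GPow R (Fin r → R) n G ≃ₗ[R]
        (Fin (Nat.card (Quot fun f f' : Fin n → Fin r => ∃ π ∈ G, f ∘ π = f')) → R)) ∧
    ∀ I : Ideal R,
      Nonempty (GPow R (Fin r → R ⧸ I) n G ≃ₗ[R]
        (Fin (Nat.card (Quot fun f f' : Fin n → Fin r => ∃ π ∈ G, f ∘ π = f')) →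
          R ⧸ I)) := by
  classical
  have : NeZero n := ⟨by omega⟩
  have := Fintype.ofFinite (Orbits G (Fin r))
  let e := (Finite.equivFin (Orbits G (Fin r))).symm
  exact ⟨⟨(GPow.equivOrbitFun Function.surjective_id).trans (.funCongrLeft R R e)⟩,
    fun I => ⟨(GPow.equivOrbitFun Ideal.Quotient.mk_surjective).trans (.funCongrLeft R _ e)⟩⟩

/-- Let `R` be a commutative unital ring, `r, n ≥ 1`, and `G ≤ S_n`.
Let `G` act on `[r]^{[n]} = {f : Fin n → Fin r}` by `(π.f)(i) = f(π.i)`, and let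
`g_{r,n}` be the number of orbits (the cardinality of the quotient of `Fin n → Fin r` by
the relation `f ~ f ∘ π` for `π ∈ G`).  Then `T^n_G(R^r) ≅ R^{g_{r,n}}`, and more
generally `T^n_G((R/I)^r) ≅ (R/I)^{g_{r,n}}` for every ideal `I ⊴ R`. -/
theorem gPower_free_module (R : Type) [CommRing R] (r n : ℕ) (hr : 1 ≤ r) (hn : 1 ≤ n)
    (G : Subgroup (Equiv.Perm (Fin n))) :
    Nonempty (GPow R (Fin r → R) n G ≃ₗ[R]
        (Fin (Nat.card (Quot fun f f' : Fin n → Fin r => ∃ π ∈ G, f ∘ π = f')) → R)) ∧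
    ∀ I : Ideal R,
      Nonempty (GPow R (Fin r → R ⧸ I) n G ≃ₗ[R]
        (Fin (Nat.card (Quot fun f f' : Fin n → Fin r => ∃ π ∈ G, f ∘ π = f')) →
          R ⧸ I)) :=
  gPower_free_module_general R r n hn G
end

section
/- Let R be a commutative unital ring, s ≥ 1 and n ≥ 1 natural numbers, a_1, ..., a_s ∈ R (zero values allowed), and G ≤ S_n a subgroup of the symmetric group on n letters. Let G act on the set of functions [s]^{[n]} = {f : {1,...,n} → {1,...,s}} by (π.f)(i) = f(π.i). Then for M = ⊕_{i=1}^s R/Ra_i there is an R-module isomorphism T^n_G(M) ≅ ⊕_{F ∈ [s]^{[n]}/G} R / ⟨a_{f(i)} : i ∈ [n], f ∈ F⟩, where F runs through all orbits of the action of G on [s]^{[n]} and ⟨a_{f(i)} : i ∈ [n], f ∈ F⟩ is the ideal generated by all elements a_{f(i)} with f in the orbit F and i ∈ {1,...,n}. -/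
open TensorProduct PiTensorProduct

/-!
`M = Π j, R ⧸ J j` is generated by the `e_j = Pi.single j 1`, so `T^n M` is spanned by the pure
tensors `e_f = e_{f 1} ⊗ ⋯ ⊗ e_{f n}` for `f : Fin n → ι`. Sending `(m_1, …, m_n)` to the family
whose `F`-component is `∑_{f ∈ F} ∏_i m_i (f i)` mod `I_F = ∑_{f ∈ F, i} J (f i)` is multilinear and
`G`-invariant, and it maps `e_f` to the unit of the `[f]`-component. Conversely `e_f` is killed by
every `J (f i)` and its class in `T^n_G M` depends only on the orbit of `f`, which defines the
inverse on `Π F, R ⧸ I_F`. Both composites fix generators, hence are the identity.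
-/

namespace GPow

variable {R : Type*} [CommRing R] {ι : Type*} {n : ℕ} (G : Subgroup (Equiv.Perm (Fin n)))

def orbitRel (f f' : Fin n → ι) : Prop := ∃ π ∈ G, f ∘ π = f'

abbrev Orbits (ι : Type*) : Type _ := Quot (orbitRel (ι := ι) G)

noncomputable instance [Finite ι] : Fintype (Orbits G ι) := Fintype.ofFinite _

noncomputable instance : DecidableEq (Orbits G ι) := Classical.decEq _

def orbitIdeal (J : ι → Ideal R) (F : Orbits G ι) : Ideal R :=
  ⨆ (f) (_ : Quot.mk (orbitRel G) f = F) (i), J (f i)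

theorem le_orbitIdeal (J : ι → Ideal R) (f : Fin n → ι) (i : Fin n) :
    J (f i) ≤ orbitIdeal G J (Quot.mk _ f) :=
  le_iSup₂_of_le f rfl (le_iSup (fun i => J (f i)) i)

theorem orbitIdeal_span_singleton (a : ι → R) (F : Orbits G ι) :
    orbitIdeal G (fun j => Ideal.span {a j}) F =
      Ideal.span {x | ∃ f, Quot.mk (orbitRel G) f = F ∧ ∃ i, x = a (f i)} := by
  refine le_antisymm (iSup₂_le fun f hf => iSup_le fun i => ?_) (Ideal.span_le.2 ?_)
  · exact Ideal.span_singleton_le_iff_mem _ |>.2 (Ideal.subset_span ⟨f, hf, i, rfl⟩)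
  · rintro _ ⟨f, hf, i, rfl⟩
    subst hf
    exact le_orbitIdeal G _ f i (Ideal.mem_span_singleton_self _)

variable [DecidableEq ι] (J : ι → Ideal R)

def gen (j : ι) : Π j, R ⧸ J j := Pi.single j 1

theorem single_mk_eq_smul_gen (j : ι) (r : R) :
    Pi.single j (Ideal.Quotient.mk (J j) r) = r • gen J j := by
  rw [gen, ← Pi.single_smul, Algebra.smul_def, mul_one, Ideal.Quotient.algebraMap_eq]

theorem span_range_gen [Finite ι] : Submodule.span R (Set.range (gen J)) = ⊤ := by
  have := Fintype.ofFinite ι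
  refine eq_top_iff.2 fun x _ => ?_
  rw [← Finset.univ_sum_single x]
  refine Submodule.sum_mem _ fun j _ => ?_
  obtain ⟨r, hr⟩ := Ideal.Quotient.mk_surjective (x j)
  rw [← hr, single_mk_eq_smul_gen]
  exact Submodule.smul_mem _ r (Submodule.subset_span ⟨j, rfl⟩)

theorem smul_tprod_gen_eq_zero (f : Fin n → ι) {i : Fin n} {x : R} (hx : x ∈ J (f i)) :
    x • tprod R (fun k => gen J (f k)) = 0 := by
  rw [← Function.update_eq_self i (fun k => gen J (f k)), ← MultilinearMap.map_update_smul,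
    ← single_mk_eq_smul_gen, Ideal.Quotient.eq_zero_iff_mem.2 hx, Pi.single_zero,
    MultilinearMap.map_update_zero]

def orbitGen : Orbits G ι → GPow R (Π j, R ⧸ J j) n G :=
  Quot.lift (fun f => Submodule.Quotient.mk (tprod R fun i => gen J (f i))) <| by
    rintro f _ ⟨π, hπ, rfl⟩
    refine Eq.symm <| (Submodule.Quotient.eq _).2 <| Submodule.subset_span ?_
    exact ⟨fun i => gen J (f i), π, hπ, rfl⟩

theorem orbitIdeal_le_ker (F : Orbits G ι) :
    orbitIdeal G J F ≤ LinearMap.ker (LinearMap.toSpanSingleton R _ (orbitGen G J F)) := by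
  refine iSup₂_le fun f hf => iSup_le fun i x hx => ?_
  subst hf
  rw [LinearMap.mem_ker, LinearMap.toSpanSingleton_apply, orbitGen, ← Submodule.Quotient.mk_smul,
    smul_tprod_gen_eq_zero J f hx, Submodule.Quotient.mk_zero]

variable [Fintype ι]

noncomputable def orbitMultilinear :
    MultilinearMap R (fun _ : Fin n => Π j, R ⧸ J j) (Π F : Orbits G ι, R ⧸ orbitIdeal G J F) :=
  ∑ f : Fin n → ι, (LinearMap.single R _ (Quot.mk _ f)).compMultilinearMap
    ((MultilinearMap.mkPiAlgebra R (Fin n) _).compLinearMap fun i =>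
      (Ideal.Quotient.factorₐ R (le_orbitIdeal G J f i)).toLinearMap ∘ₗ LinearMap.proj (f i))

theorem orbitMultilinear_gen (f : Fin n → ι) :
    orbitMultilinear G J (fun i => gen J (f i)) = Pi.single (Quot.mk _ f) 1 := by
  rw [orbitMultilinear, sum_apply, Finset.sum_eq_single f]
  · simp [gen]
  · intro g _ hgf
    obtain ⟨i, hi⟩ := Function.ne_iff.1 hgf
    simp [gen, Finset.prod_eq_zero (Finset.mem_univ i), Pi.single_eq_of_ne hi]
  · simp

theorem orbitMultilinear_perm {π : Equiv.Perm (Fin n)} (hπ : π ∈ G) (m : Fin n → Π j, R ⧸ J j) :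
    orbitMultilinear G J (fun i => m (π i)) = orbitMultilinear G J m := by
  suffices (orbitMultilinear G J).domDomCongr π = orbitMultilinear G J from
    DFunLike.congr_fun this m
  refine MultilinearMap.ext_of_span_eq_top (g := fun _ => gen J) (fun _ => span_range_gen J)
    fun f => ?_
  rw [MultilinearMap.domDomCongr_apply, orbitMultilinear_gen, orbitMultilinear_gen,
    ← Quot.sound (show orbitRel G f (fun i => f (π i)) from ⟨π, hπ, rfl⟩)]

noncomputable def toPi : GPow R (Π j, R ⧸ J j) n G →ₗ[R] Π F, R ⧸ orbitIdeal G J F :=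
  (GRel R _ n G).liftQ (lift (orbitMultilinear G J)) <| Submodule.span_le.2 <| by
    rintro _ ⟨m, π, hπ, rfl⟩
    simp only [SetLike.mem_coe, LinearMap.mem_ker, map_sub, lift.tprod, sub_eq_zero]
    exact orbitMultilinear_perm G J hπ m

theorem toPi_mk_tprod_gen (f : Fin n → ι) :
    toPi G J (Submodule.Quotient.mk (tprod R fun i => gen J (f i))) =
      Pi.single (Quot.mk _ f) 1 := by
  rw [toPi, Submodule.liftQ_apply, lift.tprod, orbitMultilinear_gen]

noncomputable def ofPi : (Π F, R ⧸ orbitIdeal G J F) →ₗ[R] GPow R (Π j, R ⧸ J j) n G :=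
  LinearMap.lsum R _ R fun F =>
    (orbitIdeal G J F).liftQ (LinearMap.toSpanSingleton R _ (orbitGen G J F))
      (orbitIdeal_le_ker G J F)

theorem ofPi_single_one (F : Orbits G ι) : ofPi G J (Pi.single F 1) = orbitGen G J F := by
  rw [ofPi, LinearMap.lsum_piSingle]
  exact one_smul R (orbitGen G J F)

theorem toPi_orbitGen (F : Orbits G ι) : toPi G J (orbitGen G J F) = Pi.single F 1 := by
  induction F using Quot.ind
  exact toPi_mk_tprod_gen G J _

noncomputable def equivPi : GPow R (Π j, R ⧸ J j) n G ≃ₗ[R] Π F, R ⧸ orbitIdeal G J F :=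
  LinearEquiv.ofLinearMap (toPi G J) (ofPi G J)
    (LinearMap.pi_ext' fun F => Submodule.linearMap_qext _ <| LinearMap.ext_ring <|
      (congrArg (toPi G J) (ofPi_single_one G J F)).trans (toPi_orbitGen G J F))
    (Submodule.linearMap_qext _ <| PiTensorProduct.ext_of_span_eq_top (g := fun _ => gen J)
      (fun _ => span_range_gen J) fun f =>
        (congrArg (ofPi G J) (toPi_mk_tprod_gen G J f)).trans (ofPi_single_one G J _))

end GPow

theorem gPower_torsion_module_general (R : Type) [CommRing R] (s n : ℕ)
    (a : Fin s → R) (G : Subgroup (Equiv.Perm (Fin n))) :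
    Nonempty (GPow R (Π i : Fin s, R ⧸ Ideal.span {a i}) n G ≃ₗ[R]
      Π F : Quot (fun f f' : Fin n → Fin s => ∃ π ∈ G, f ∘ π = f'),
        R ⧸ Ideal.span {x : R | ∃ f : Fin n → Fin s,
          Quot.mk (fun f f' : Fin n → Fin s => ∃ π ∈ G, f ∘ π = f') f = F ∧
          ∃ i : Fin n, x = a (f i)}) :=
  ⟨(GPow.equivPi G fun j => Ideal.span {a j}).trans <| LinearEquiv.piCongrRight fun F =>
    Submodule.quotEquivOfEq _ _ (GPow.orbitIdeal_span_singleton G a F)⟩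

/-- Let `R` be a commutative unital ring, `s, n ≥ 1`, `a_1, …, a_s ∈ R`
(zero values allowed) and `G ≤ S_n`.  Let `G` act on `[s]^{[n]} = {f : Fin n → Fin s}`
by `(π.f)(i) = f(π.i)`.  Then for `M = ⊕_{i=1}^s R/Ra_i` we have
`T^n_G(M) ≅ ⊕_{F ∈ [s]^{[n]}/G} R/⟨a_{f(i)} : i ∈ [n], f ∈ F⟩`, where `F` runs through
the orbits of the action of `G` on `[s]^{[n]}`. -/
theorem gPower_torsion_module (R : Type) [CommRing R] (s n : ℕ) (hs : 1 ≤ s) (hn : 1 ≤ n)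
    (a : Fin s → R) (G : Subgroup (Equiv.Perm (Fin n))) :
    Nonempty (GPow R (Π i : Fin s, R ⧸ Ideal.span {a i}) n G ≃ₗ[R]
      Π F : Quot (fun f f' : Fin n → Fin s => ∃ π ∈ G, f ∘ π = f'),
        R ⧸ Ideal.span {x : R | ∃ f : Fin n → Fin s,
          Quot.mk (fun f f' : Fin n → Fin s => ∃ π ∈ G, f ∘ π = f') f = F ∧
          ∃ i : Fin n, x = a (f i)}) :=
  gPower_torsion_module_general R s n a G
end
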